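/- arXiv:1912.03409 — 4 statements merged into one kernel-verified Lean document; each statement's English description precedes it below -/
import Mathlib

section
/- Suppose the cocycle (ψ,ϑ) is σ-periodic and (H1), (H2) with j = 1 and (H3) hold. Let γ(t) = (ϑ^t(q), u(t)), t ≥ 0, be a semi-trajectory of the skew-product semiflow with precompact image. Then every point (q', v) of the ω-limit set ω(γ₀) lies on a σ-periodic trajectory of the cocycle at q', and each fibre ω_{q'}(γ₀) is homeomorphic to a closed segment of ℝ (i.e., it is a nonempty compact connected subset of a line after projection by Π). -/
/-!
The skew-product semiflow `π^t (θ, u) = (ϑ^t θ, ψ^t (θ, u))` has a compact ω-limit set `ω`, and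
through every point of `ω` passes a complete trajectory lying in `ω`. For two such trajectories
over the same base point, (H3) makes `e^{2νt} V (w₁ t - w₂ t)` nonincreasing, and boundedness makes
it tend to `0` as `t → -∞`; hence `V (w₁ t - w₂ t) < 0` unless `w₁ t = w₂ t`. As `V ≥ 0` on
`ker Π` by (H1), `Π` is injective on the fibres of `ω`, and trajectories in `ω` are backward
unique.

For `j = 1` we have `Π = ⟪e, ·⟫ e`, and the period map `T = ψ^σ (θ, ·)` is strictly increasing in
the coordinate `⟪e, ·⟫` on the fibre `ω_θ`, which is the cluster set of the orbit
`n ↦ ψ^{nσ+τ} (q, u₀)` of `T`. If `ω_θ` has points on both sides of a level `c`, this orbit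
crosses `c` downwards infinitely often, which yields `y ∈ ω_θ` with `⟪e, T y⟫ ≤ c ≤ ⟪e, y⟫`.
With monotonicity this forces `T = id` on `ω_θ`, so every point of `ω` lies on a `σ`-periodic
trajectory; then the same crossings show that `⟪e, ·⟫ '' ω_θ` is an interval.
-/

open MeasureTheory Set Bornology Filter Topology RealInnerProductSpace

noncomputable section

variable {Q H : Type*}

section Defs
variable [MetricSpace Q] [NormedAddCommGroup H] [InnerProductSpace ℝ H] [CompleteSpace H]

def IsFlow (ϑ : ℝ → Q → Q) : Prop :=
  (∀ q, ϑ 0 q = q) ∧ (∀ t s q, ϑ (t + s) q = ϑ t (ϑ s q)) ∧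
    Continuous fun p : ℝ × Q => ϑ p.1 p.2

def IsCocycle (ϑ : ℝ → Q → Q) (ψ : ℝ → Q → H → H) : Prop :=
  (∀ q u, ψ 0 q u = u) ∧
  (∀ t s : ℝ, 0 ≤ t → 0 ≤ s → ∀ q u, ψ (t + s) q u = ψ t (ϑ s q) (ψ s q u)) ∧
  ContinuousOn (fun p : ℝ × Q × H => ψ p.1 p.2.1 p.2.2) {p : ℝ × Q × H | 0 ≤ p.1}

def IsCompleteTraj (ϑ : ℝ → Q → Q) (ψ : ℝ → Q → H → H) (q : Q) (u : ℝ → H) : Prop :=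
  Continuous u ∧ ∀ t s : ℝ, 0 ≤ t → u (t + s) = ψ t (ϑ s q) (u s)

def IsAmenable (ν : ℝ) (u : ℝ → H) : Prop :=
  IntegrableOn (fun s : ℝ => Real.exp (2 * ν * s) * ‖u s‖ ^ 2) (Set.Iic (0:ℝ))

def amenSet (ϑ : ℝ → Q → Q) (ψ : ℝ → Q → H → H) (ν : ℝ) (q : Q) : Set H :=
  {u₀ | ∃ u : ℝ → H, IsCompleteTraj ϑ ψ q u ∧ IsAmenable ν u ∧ u 0 = u₀}

structure HypH1 (P : H →L[ℝ] H) (Hplus Hminus : Submodule ℝ H) : Prop where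
  selfAdj : IsSelfAdjoint P
  closed_plus : IsClosed (Hplus : Set H)
  orth : Hminus = Hplusᗮ
  inv_plus : ∀ u ∈ Hplus, P u ∈ Hplus
  inv_minus : ∀ u ∈ Hminus, P u ∈ Hminus
  pos : ∀ u ∈ Hplus, u ≠ 0 → (0:ℝ) < ⟪P u, u⟫
  neg : ∀ u ∈ Hminus, u ≠ 0 → ⟪P u, u⟫ < 0

def HypH2 (Hminus : Submodule ℝ H) (j : ℕ) : Prop :=
  FiniteDimensional ℝ Hminus ∧ Module.finrank ℝ Hminus = j

def HypH3 (ψ : ℝ → Q → H → H) (P : H →L[ℝ] H) (δ ν : ℝ) : Prop :=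
  0 < δ ∧ 0 < ν ∧ ∀ (q : Q) (u v : H) (l r : ℝ), 0 ≤ l → l ≤ r →
    Real.exp (2 * ν * r) * ⟪P (ψ r q u - ψ r q v), ψ r q u - ψ r q v⟫ -
      Real.exp (2 * ν * l) * ⟪P (ψ l q u - ψ l q v), ψ l q u - ψ l q v⟫ ≤
      -δ * ∫ s in l..r, Real.exp (2 * ν * s) * ‖ψ s q u - ψ s q v‖ ^ 2

def IsOrthProjOnto (Hminus : Submodule ℝ H) (Pi : H →L[ℝ] H) : Prop :=
  (∀ u, Pi u ∈ Hminus) ∧ ∀ u, u - Pi u ∈ Hminusᗮ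

def HypCOM2 (ψ : ℝ → Q → H → H) : Prop :=
  ∃ tc : ℝ, 0 < tc ∧ ∀ (q : Q) (s : Set H), IsBounded s → IsCompact (closure (ψ tc q '' s))

def HypCOM3 (ψ : ℝ → Q → H → H) : Prop :=
  ∀ (q : Q) (u₀ : H), IsBounded ((fun t => ψ t q u₀) '' Set.Ici (0:ℝ)) →
    IsCompact (closure ((fun t => ψ t q u₀) '' Set.Ici (0:ℝ)))

def LyapunovStable (ψ : ℝ → Q → H → H) (q : Q) (v : ℝ → H) : Prop :=
  ∀ ε > 0, ∃ η > 0, ∀ u₀ : H, ‖u₀ - v 0‖ < η → ∀ t ≥ 0, ‖ψ t q u₀ - v t‖ < ε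

end Defs

def circleFlow (σ : ℝ) : ℝ → AddCircle σ → AddCircle σ := fun t θ => θ + (t : AddCircle σ)

/-- The ω-limit set in `Q × H` of the skew-product semi-trajectory starting at `(q, u₀)`:
limits of sequences `π^{t_k}(q, u₀) = (ϑ^{t_k}(q), ψ^{t_k}(q, u₀))` with `t_k → +∞`. -/
def omegaLimitSet {Q H : Type*} [MetricSpace Q] [NormedAddCommGroup H]
    [InnerProductSpace ℝ H] (ϑ : ℝ → Q → Q) (ψ : ℝ → Q → H → H) (q : Q) (u₀ : H) :
    Set (Q × H) :=
  {p | ∃ tk : ℕ → ℝ, (∀ n, 0 ≤ tk n) ∧ Tendsto tk atTop atTop ∧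
    Tendsto (fun n => (ϑ (tk n) q, ψ (tk n) q u₀)) atTop (𝓝 p)}

structure IsSemiflow {X : Type*} [TopologicalSpace X] (Φ : ℝ → X → X) : Prop where
  map_zero : ∀ x, Φ 0 x = x
  map_add : ∀ t s, 0 ≤ t → 0 ≤ s → ∀ x, Φ (t + s) x = Φ t (Φ s x)
  continuousOn : ContinuousOn (fun p : ℝ × X => Φ p.1 p.2) {p | 0 ≤ p.1}

namespace IsSemiflow

variable {X : Type*} [TopologicalSpace X] {Φ : ℝ → X → X} {x y : X} {t : ℝ}

theorem continuous_apply (hΦ : IsSemiflow Φ) (ht : 0 ≤ t) : Continuous (Φ t) :=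
  hΦ.continuousOn.comp_continuous (f := fun x => (t, x)) (by fun_prop) fun _ => ht

theorem continuousAt_apply_add (hΦ : IsSemiflow Φ) {r s : ℝ} (hs : 0 < s + r) :
    ContinuousAt (fun s' => Φ (s' + r) x) s := by
  have hmem : {p : ℝ × X | 0 ≤ p.1} ∈ 𝓝 (s + r, x) :=
    (continuous_fst.tendsto _).eventually (eventually_gt_nhds hs) |>.mono fun _ => le_of_lt
  exact (hΦ.continuousOn.continuousAt hmem).comp (f := fun s' => (s' + r, x)) (by fun_prop)

theorem tendsto_apply (hΦ : IsSemiflow Φ) {α : Type*} {l : Filter α} {t : α → ℝ}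
    {x : α → X} {t₀ : ℝ} {x₀ : X} (ht₀ : 0 ≤ t₀) (ht : ∀ᶠ a in l, 0 ≤ t a)
    (htl : Tendsto t l (𝓝 t₀)) (hxl : Tendsto x l (𝓝 x₀)) :
    Tendsto (fun a => Φ (t a) (x a)) l (𝓝 (Φ t₀ x₀)) :=
  (hΦ.continuousOn (t₀, x₀) ht₀).tendsto.comp
    (tendsto_nhdsWithin_iff.2 ⟨htl.prodMk_nhds hxl, ht⟩)

theorem mapClusterPt_apply (hΦ : IsSemiflow Φ) (hy : MapClusterPt y atTop (Φ · x))
    (ht : 0 ≤ t) : MapClusterPt (Φ t y) atTop (Φ · x) := by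
  have hshift : (Φ t ∘ fun s => Φ s x) =ᶠ[atTop] (Φ · x) ∘ (t + ·) :=
    (eventually_ge_atTop 0).mono fun s hs => (hΦ.map_add t s ht hs x).symm
  exact ((hy.continuousAt_comp (hΦ.continuous_apply ht).continuousAt).congrFun hshift).of_comp
    (tendsto_atTop_add_const_left _ t tendsto_id)

theorem exists_mapClusterPt_apply_eq [T2Space X] (hΦ : IsSemiflow Φ) {K : Set X}
    (hK : IsCompact K) (hxK : ∀ᶠ s in atTop, Φ s x ∈ K) (hy : MapClusterPt y atTop (Φ · x))
    (ht : 0 ≤ t) : ∃ z, MapClusterPt z atTop (Φ · x) ∧ Φ t z = y := by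
  obtain ⟨U, hU, hUy⟩ := mapClusterPt_iff_ultrafilter.1 hy
  have hshift : Tendsto (· - t) (U : Filter ℝ) atTop :=
    (tendsto_atTop_add_const_right _ (-t) tendsto_id).comp hU
  obtain ⟨z, -, hz⟩ := hK.ultrafilter_le_nhds' (U.map fun s => Φ (s - t) x)
    (hshift.eventually hxK)
  refine ⟨z, (Tendsto.mapClusterPt hz).of_comp hshift, tendsto_nhds_unique ?_ hUy⟩
  refine (((hΦ.continuous_apply ht).tendsto z).comp hz).congr' ?_
  filter_upwards [hU (eventually_ge_atTop t)] with s hs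
  simp [← hΦ.map_add t (s - t) ht (sub_nonneg.2 hs)]

theorem exists_orbit_of_chain (hΦ : IsSemiflow Φ) {z : ℕ → X}
    (hz : ∀ n, Φ 1 (z (n + 1)) = z n) :
    ∃ γ : ℝ → X, Continuous γ ∧ (∀ t s, 0 ≤ t → γ (t + s) = Φ t (γ s)) ∧
      ∀ (s : ℝ) (n : ℕ), 0 ≤ s + n → γ s = Φ (s + n) (z n) := by
  have hstep : ∀ (s : ℝ) (n : ℕ), 0 ≤ s + n → Φ (s + ↑(n + 1)) (z (n + 1)) = Φ (s + n) (z n) := by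
    intro s n hs
    rw [Nat.cast_succ, ← add_assoc, hΦ.map_add _ _ hs zero_le_one, hz]
  have hindep : ∀ (s : ℝ) (m n : ℕ), 0 ≤ s + m → m ≤ n → Φ (s + n) (z n) = Φ (s + m) (z m) := by
    intro s m n hm hmn
    induction n, hmn using Nat.le_induction with
    | base => rfl
    | succ n hmn ih =>
      rw [hstep s n (hm.trans (by gcongr)), ih]
  have hceil : ∀ s : ℝ, 0 ≤ s + ⌈-s⌉₊ := fun s => by linarith [Nat.le_ceil (-s)]
  set γ : ℝ → X := fun s => Φ (s + ⌈-s⌉₊) (z ⌈-s⌉₊)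
  have hγ : ∀ (s : ℝ) (n : ℕ), 0 ≤ s + n → γ s = Φ (s + n) (z n) := fun s n hn =>
    (le_total ⌈-s⌉₊ n).elim (fun h => (hindep s _ n (hceil s) h).symm)
      (fun h => hindep s n _ hn h)
  refine ⟨γ, continuous_iff_continuousAt.2 fun s₀ => ?_, fun t s ht => ?_, hγ⟩
  · set n := ⌈-s₀⌉₊ + 1
    have hn : 0 < s₀ + n := by push_cast [n]; linarith [hceil s₀]
    refine (hΦ.continuousAt_apply_add (x := z n) hn).congr ?_
    filter_upwards [eventually_gt_nhds (sub_one_lt s₀)] with s hs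
    exact (hγ s n (by push_cast [n]; linarith [hceil s₀])).symm
  · have hs := hceil s
    rw [hγ (t + s) _ (by linarith), hγ s _ hs, add_assoc, hΦ.map_add _ _ ht hs]

theorem exists_orbit_through_mapClusterPt [T2Space X] (hΦ : IsSemiflow Φ) {K : Set X}
    (hK : IsCompact K) (hxK : ∀ᶠ s in atTop, Φ s x ∈ K) (hy : MapClusterPt y atTop (Φ · x)) :
    ∃ γ : ℝ → X, Continuous γ ∧ γ 0 = y ∧ (∀ t s, 0 ≤ t → γ (t + s) = Φ t (γ s)) ∧
      ∀ s, MapClusterPt (γ s) atTop (Φ · x) := by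
  choose! B hBω hB using fun y' (hy' : MapClusterPt y' atTop (Φ · x)) =>
    hΦ.exists_mapClusterPt_apply_eq hK hxK hy' zero_le_one
  have hzω : ∀ n, MapClusterPt (B^[n] y) atTop (Φ · x) := fun n => by
    induction n with
    | zero => exact hy
    | succ n ih => rw [Function.iterate_succ_apply']; exact hBω _ ih
  obtain ⟨γ, hγc, hγ, hγz⟩ := hΦ.exists_orbit_of_chain (z := fun n => B^[n] y) fun n => by
    simp only [Function.iterate_succ_apply']; exact hB _ (hzω n)
  refine ⟨γ, hγc, by simpa [hΦ.map_zero] using hγz 0 0 (by simp), hγ, fun s => ?_⟩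
  have hs : 0 ≤ s + ⌈-s⌉₊ := by linarith [Nat.le_ceil (-s)]
  rw [hγz s _ hs]
  exact hΦ.mapClusterPt_apply (hzω _) hs

end IsSemiflow

theorem Nat.frequently_atTop_and_not_succ {p : ℕ → Prop} (h₁ : ∃ᶠ n in atTop, p n)
    (h₂ : ∃ᶠ n in atTop, ¬ p n) : ∃ᶠ n in atTop, p n ∧ ¬ p (n + 1) := by
  by_contra h
  obtain ⟨N, hN⟩ := eventually_atTop.1 (not_frequently.1 h)
  obtain ⟨n, hn, hpn⟩ := frequently_atTop.1 h₁ N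
  have hp : ∀ k, p (n + k) := fun k => by
    induction k with
    | zero => exact hpn
    | succ k ih => exact not_not.1 (not_and.1 (hN (n + k) (hn.trans (Nat.le_add_right n k))) ih)
  refine h₂ (eventually_atTop.2 ⟨n, fun m hm => ?_⟩)
  simpa [Nat.add_sub_cancel' hm] using hp (m - n)

theorem exists_mapClusterPt_downcrossing {X : Type*} [TopologicalSpace X] {K : Set X}
    (hK : IsCompact K) {T : X → X} (hT : Continuous T) {x : ℕ → X} (hxK : ∀ n, x n ∈ K)
    (hxT : ∀ n, x (n + 1) = T (x n)) {φ : X → ℝ} (hφ : Continuous φ) {c : ℝ}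
    (hgt : ∃ᶠ n in atTop, c < φ (x n)) (hle : ∃ᶠ n in atTop, φ (x n) ≤ c) :
    ∃ y, MapClusterPt y atTop x ∧ φ (T y) ≤ c ∧ c ≤ φ y := by
  set F := atTop ⊓ 𝓟 {n | c < φ (x n) ∧ ¬ c < φ (x (n + 1))}
  have : F.NeBot := frequently_iff_neBot.1 <|
    Nat.frequently_atTop_and_not_succ hgt (by simpa only [not_lt] using hle)
  obtain ⟨y, -, hy⟩ := hK.exists_mapClusterPt (f := F) (tendsto_principal.2 (.of_forall hxK))
  have hev : ∀ᶠ n in F, c < φ (x n) ∧ ¬ c < φ (x (n + 1)) :=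
    eventually_inf_principal.2 (.of_forall fun _ => id)
  refine ⟨y, hy.mono inf_le_left, ?_, ?_⟩
  · refine isClosed_le (hφ.comp hT) continuous_const |>.mem_of_mapClusterPt hy ?_
    exact hev.mono fun n hn => by simpa [hxT] using hn.2
  · exact isClosed_le continuous_const hφ |>.mem_of_mapClusterPt hy (hev.mono fun n hn => hn.1.le)

def skewProduct (ϑ : ℝ → Q → Q) (ψ : ℝ → Q → H → H) (t : ℝ) (p : Q × H) : Q × H :=
  (ϑ t p.1, ψ t p.1 p.2)

section Cocycle

variable [MetricSpace Q] [NormedAddCommGroup H] {ϑ : ℝ → Q → Q} {ψ : ℝ → Q → H → H} {θ : Q}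

theorem IsCocycle.isSemiflow_skewProduct (hϑ : IsFlow ϑ) (hcoc : IsCocycle ϑ ψ) :
    IsSemiflow (skewProduct ϑ ψ) where
  map_zero p := Prod.ext (hϑ.1 _) (hcoc.1 _ _)
  map_add t s ht hs p := Prod.ext (hϑ.2.1 t s _) (hcoc.2.1 t s ht hs _ _)
  continuousOn := (hϑ.2.2.comp (by fun_prop : Continuous fun p : ℝ × Q × H => (p.1, p.2.1))
    |>.continuousOn).prodMk hcoc.2.2

theorem IsCocycle.continuous_apply (hcoc : IsCocycle ϑ ψ) {t : ℝ} (ht : 0 ≤ t) (θ : Q) :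
    Continuous (ψ t θ) :=
  hcoc.2.2.comp_continuous (f := fun w => (t, θ, w)) (by fun_prop) fun _ => ht

theorem IsCompleteTraj.comp_add_const {w : ℝ → H} (hϑ : IsFlow ϑ)
    (hw : IsCompleteTraj ϑ ψ θ w) (r : ℝ) : IsCompleteTraj ϑ ψ (ϑ r θ) (fun t => w (t + r)) :=
  ⟨hw.1.comp (continuous_add_const r), fun t s ht => by
    simp only [add_assoc, hw.2 t (s + r) ht, hϑ.2.1]⟩

end Cocycle

section Lyapunov

variable [NormedAddCommGroup H] [InnerProductSpace ℝ H] {ϑ : ℝ → Q → Q}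
  {ψ : ℝ → Q → H → H} {P : H →L[ℝ] H} {δ ν M : ℝ} {θ : Q} {w₁ w₂ : ℝ → H}

theorem HypH3.exp_mul_inner_sub_le (h3 : HypH3 ψ P δ ν) (hw₁ : IsCompleteTraj ϑ ψ θ w₁)
    (hw₂ : IsCompleteTraj ϑ ψ θ w₂) {r s : ℝ} (hrs : r ≤ s) :
    Real.exp (2 * ν * s) * ⟪P (w₁ s - w₂ s), w₁ s - w₂ s⟫ ≤
      Real.exp (2 * ν * r) * ⟪P (w₁ r - w₂ r), w₁ r - w₂ r⟫ -
        δ * ∫ t in r..s, Real.exp (2 * ν * t) * ‖w₁ t - w₂ t‖ ^ 2 := by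
  set g : ℝ → ℝ := fun t => Real.exp (2 * ν * t) * ‖w₁ t - w₂ t‖ ^ 2
  have hψ : ∀ {w}, IsCompleteTraj ϑ ψ θ w → ∀ t, 0 ≤ t → ψ t (ϑ r θ) (w r) = w (t + r) :=
    fun hw t ht => (hw.2 t r ht).symm
  -- (H3) at the base point `ϑ r θ` over `[0, s - r]`, with the time variable shifted by `r`.
  have h := h3.2.2 (ϑ r θ) (w₁ r) (w₂ r) 0 (s - r) le_rfl (sub_nonneg.2 hrs)
  rw [hψ hw₁ _ (sub_nonneg.2 hrs), hψ hw₂ _ (sub_nonneg.2 hrs), hψ hw₁ 0 le_rfl,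
    hψ hw₂ 0 le_rfl, sub_add_cancel, zero_add, mul_zero, Real.exp_zero, one_mul,
    intervalIntegral.integral_congr (g := fun t => Real.exp (-(2 * ν * r)) * g (t + r))
      fun t ht => ?_, intervalIntegral.integral_const_mul,
    intervalIntegral.integral_comp_add_right g r, zero_add, sub_add_cancel] at h
  · have hr := Real.exp_pos (2 * ν * r)
    have hexp : Real.exp (2 * ν * s) = Real.exp (2 * ν * r) * Real.exp (2 * ν * (s - r)) := by
      rw [← Real.exp_add]; ring_nf
    have hexp' : Real.exp (2 * ν * r) * Real.exp (-(2 * ν * r)) = 1 := by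
      rw [← Real.exp_add, add_neg_cancel, Real.exp_zero]
    have := mul_le_mul_of_nonneg_left h hr.le
    rw [hexp]
    linear_combination this - (δ * ∫ t in r..s, g t) * hexp'
  · rw [Set.uIcc_of_le (sub_nonneg.2 hrs)] at ht
    simp only [g, ← hψ hw₁ t ht.1, ← hψ hw₂ t ht.1]
    rw [← mul_assoc, ← Real.exp_add]
    ring_nf

theorem tendsto_exp_mul_inner_atBot (P : H →L[ℝ] H) (hν : 0 < ν) {d : ℝ → H}
    (hd : ∀ t, ‖d t‖ ≤ M) :
    Tendsto (fun t => Real.exp (2 * ν * t) * ⟪P (d t), d t⟫) atBot (𝓝 0) := by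
  have hexp : Tendsto (fun t => Real.exp (2 * ν * t)) atBot (𝓝 0) :=
    Real.tendsto_exp_atBot.comp ((tendsto_const_mul_atBot_of_pos (by positivity)).2 tendsto_id)
  refine hexp.zero_mul_isBoundedUnder_le (isBoundedUnder_of ⟨‖P‖ * M ^ 2, fun t => ?_⟩)
  calc ‖⟪P (d t), d t⟫‖ ≤ ‖P (d t)‖ * ‖d t‖ := norm_inner_le_norm _ _
    _ ≤ ‖P‖ * ‖d t‖ * ‖d t‖ := by gcongr; exact P.le_opNorm _
    _ ≤ ‖P‖ * M ^ 2 := by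
      rw [mul_assoc, ← sq]; gcongr; exact hd t

theorem HypH3.inner_sub_neg (h3 : HypH3 ψ P δ ν) (hw₁ : IsCompleteTraj ϑ ψ θ w₁)
    (hw₂ : IsCompleteTraj ϑ ψ θ w₂) (hM : ∀ t, ‖w₁ t - w₂ t‖ ≤ M) {t : ℝ}
    (hne : w₁ t ≠ w₂ t) : ⟪P (w₁ t - w₂ t), w₁ t - w₂ t⟫ < 0 := by
  set g : ℝ → ℝ := fun s => Real.exp (2 * ν * s) * ‖w₁ s - w₂ s‖ ^ 2
  have hg : Continuous g := by have := hw₁.1; have := hw₂.1; fun_prop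
  have hgt : 0 < g t := by have := sub_ne_zero.2 hne; positivity
  obtain ⟨η, hη, hpos⟩ := Metric.eventually_nhds_iff.1
    (continuousAt_const.eventually_lt hg.continuousAt hgt)
  set I := ∫ s in (t - η)..t, g s
  have hI : 0 < I := intervalIntegral.intervalIntegral_pos_of_pos_on (hg.intervalIntegrable _ _)
    (fun s hs => hpos (by rw [Real.dist_eq, abs_of_neg (by linarith [hs.2])]; linarith [hs.1]))
    (by linarith)
  -- The weighted form drops by at least `δ * I > 0` across `[t - η, t]` and tends to `0` at `-∞`.
  have hbound : ∀ b ≤ t - η, Real.exp (2 * ν * t) * ⟪P (w₁ t - w₂ t), w₁ t - w₂ t⟫ ≤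
      Real.exp (2 * ν * b) * ⟪P (w₁ b - w₂ b), w₁ b - w₂ b⟫ - δ * I := by
    intro b hb
    have hsplit := intervalIntegral.integral_add_adjacent_intervals
      (hg.intervalIntegrable (μ := volume) b (t - η)) (hg.intervalIntegrable (t - η) t)
    have hnn : 0 ≤ ∫ s in b..(t - η), g s :=
      intervalIntegral.integral_nonneg hb fun s _ => by positivity
    have := h3.exp_mul_inner_sub_le hw₁ hw₂ (hb.trans (by linarith) : b ≤ t)
    nlinarith [h3.1]
  have hlim := ge_of_tendsto ((tendsto_exp_mul_inner_atBot P h3.2.1 hM).sub_const (δ * I))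
    ((eventually_le_atBot (t - η)).mono hbound)
  have : Real.exp (2 * ν * t) * ⟪P (w₁ t - w₂ t), w₁ t - w₂ t⟫ < 0 := by nlinarith [h3.1]
  exact neg_of_mul_neg_right this (Real.exp_pos _).le

theorem HypH3.apply_eq_of_apply_eq_of_le (h3 : HypH3 ψ P δ ν) (hw₁ : IsCompleteTraj ϑ ψ θ w₁)
    (hw₂ : IsCompleteTraj ϑ ψ θ w₂) (hM : ∀ t, ‖w₁ t - w₂ t‖ ≤ M) {s t : ℝ} (hst : s ≤ t)
    (heq : w₁ t = w₂ t) : w₁ s = w₂ s := by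
  by_contra hne
  have hneg := h3.inner_sub_neg hw₁ hw₂ hM hne
  have hmono := h3.exp_mul_inner_sub_le hw₁ hw₂ hst
  rw [heq, sub_self, map_zero, inner_zero_left, mul_zero] at hmono
  have hI : 0 ≤ ∫ r in s..t, Real.exp (2 * ν * r) * ‖w₁ r - w₂ r‖ ^ 2 :=
    intervalIntegral.integral_nonneg hst fun _ _ => by positivity
  nlinarith [h3.1, Real.exp_pos (2 * ν * s)]

theorem HypH3.eq_of_apply_zero_eq (h3 : HypH3 ψ P δ ν) (hw₁ : IsCompleteTraj ϑ ψ θ w₁)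
    (hw₂ : IsCompleteTraj ϑ ψ θ w₂) (hM : ∀ t, ‖w₁ t - w₂ t‖ ≤ M) (h0 : w₁ 0 = w₂ 0) :
    w₁ = w₂ := by
  funext t
  rcases le_total t 0 with ht | ht
  · exact h3.apply_eq_of_apply_eq_of_le hw₁ hw₂ hM ht h0
  · rw [← add_zero t, hw₁.2 t 0 ht, hw₂.2 t 0 ht, h0]

variable [CompleteSpace H] {Pi : H →L[ℝ] H} {Hplus Hminus : Submodule ℝ H}

theorem HypH1.inner_nonneg_of_orthProj_eq_zero (h1 : HypH1 P Hplus Hminus)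
    (hPi : IsOrthProjOnto Hminus Pi) {x : H} (hx : Pi x = 0) : 0 ≤ ⟪P x, x⟫ := by
  have : CompleteSpace Hplus := h1.closed_plus.completeSpace_coe
  have hx' : x ∈ Hplus := by
    simpa [hx, h1.orth, Submodule.orthogonal_orthogonal] using hPi.2 x
  rcases eq_or_ne x 0 with rfl | hne
  · simp
  · exact (h1.pos x hx' hne).le

theorem HypH3.apply_eq_of_orthProj_apply_eq (h3 : HypH3 ψ P δ ν) (h1 : HypH1 P Hplus Hminus)
    (hPi : IsOrthProjOnto Hminus Pi) (hw₁ : IsCompleteTraj ϑ ψ θ w₁)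
    (hw₂ : IsCompleteTraj ϑ ψ θ w₂) (hM : ∀ t, ‖w₁ t - w₂ t‖ ≤ M) {t : ℝ}
    (h : Pi (w₁ t) = Pi (w₂ t)) : w₁ t = w₂ t := by
  by_contra hne
  exact (h3.inner_sub_neg hw₁ hw₂ hM hne).not_ge
    (h1.inner_nonneg_of_orthProj_eq_zero hPi (by rw [map_sub, h, sub_self]))

end Lyapunov

theorem HypH2.exists_orthProj_eq_inner_smul [NormedAddCommGroup H] [InnerProductSpace ℝ H]
    {Hminus : Submodule ℝ H} {Pi : H →L[ℝ] H} (h2 : HypH2 Hminus 1)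
    (hPi : IsOrthProjOnto Hminus Pi) : ∃ e : H, ∀ x, Pi x = ⟪e, x⟫ • e := by
  obtain ⟨w, hw, hw0⟩ := Submodule.exists_mem_ne_zero_of_ne_bot (p := Hminus) fun h => by
    subst h; simp [HypH2] at h2
  set e := ‖w‖⁻¹ • w
  have he : ‖e‖ = 1 := norm_smul_inv_norm hw0
  obtain rfl : Hminus = ℝ ∙ e := eq_span_singleton_of_mem_of_finrank_eq_one h2.2
    (Hminus.smul_mem _ hw) (norm_ne_zero_iff.1 (by rw [he]; exact one_ne_zero))
  refine ⟨e, fun x => ?_⟩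
  rw [← Submodule.starProjection_unit_singleton ℝ he,
    Submodule.eq_starProjection_of_mem_orthogonal (hPi.1 x) (hPi.2 x)]

section OmegaLimit

variable [MetricSpace Q] [NormedAddCommGroup H] [InnerProductSpace ℝ H] {ϑ : ℝ → Q → Q}
  {ψ : ℝ → Q → H → H} {q θ : Q} {u₀ v v₁ v₂ : H} {K : Set (Q × H)}

theorem mem_omegaLimitSet_iff {p : Q × H} :
    p ∈ omegaLimitSet ϑ ψ q u₀ ↔ MapClusterPt p atTop (skewProduct ϑ ψ · (q, u₀)) := by
  constructor
  · rintro ⟨tk, -, htk, hp⟩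
    exact hp.mapClusterPt.of_comp htk
  · intro hp
    obtain ⟨tk, hp, htk⟩ := hp.exists_seq_tendsto
    refine ⟨fun n => max (tk n) 0, fun n => le_max_right _ _,
      tendsto_atTop_mono (fun n => le_max_left _ _) htk, hp.congr' ?_⟩
    filter_upwards [htk.eventually_ge_atTop 0] with n hn
    simp [skewProduct, max_eq_left hn]

theorem isClosed_omegaLimitSet : IsClosed (omegaLimitSet ϑ ψ q u₀) := by
  convert isClosed_setOfPred_clusterPt (f := map (skewProduct ϑ ψ · (q, u₀)) atTop) using 1
  ext p
  exact mem_omegaLimitSet_iff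

theorem omegaLimitSet_subset (hK : IsClosed K) (huK : ∀ t ≥ 0, (ϑ t q, ψ t q u₀) ∈ K) :
    omegaLimitSet ϑ ψ q u₀ ⊆ K := fun _ hp =>
  hK.mem_of_mapClusterPt (mem_omegaLimitSet_iff.1 hp) ((eventually_ge_atTop 0).mono huK)

theorem isCompact_omegaLimitSet_fibre (hK : IsCompact K)
    (huK : ∀ t ≥ 0, (ϑ t q, ψ t q u₀) ∈ K) (θ : Q) :
    IsCompact {v | (θ, v) ∈ omegaLimitSet ϑ ψ q u₀} :=
  (hK.image continuous_snd).of_isClosed_subset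
    (isClosed_omegaLimitSet.preimage (Continuous.prodMk_right θ))
    fun _ hv => ⟨_, omegaLimitSet_subset hK.isClosed huK hv, rfl⟩

theorem skewProduct_mem_omegaLimitSet (hϑ : IsFlow ϑ) (hcoc : IsCocycle ϑ ψ)
    (hv : (θ, v) ∈ omegaLimitSet ϑ ψ q u₀) {t : ℝ} (ht : 0 ≤ t) :
    (ϑ t θ, ψ t θ v) ∈ omegaLimitSet ϑ ψ q u₀ :=
  mem_omegaLimitSet_iff.2 <|
    (hcoc.isSemiflow_skewProduct hϑ).mapClusterPt_apply (mem_omegaLimitSet_iff.1 hv) ht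

theorem exists_completeTraj_of_mem_omegaLimitSet (hϑ : IsFlow ϑ) (hcoc : IsCocycle ϑ ψ)
    (hK : IsCompact K) (huK : ∀ t ≥ 0, (ϑ t q, ψ t q u₀) ∈ K)
    (hv : (θ, v) ∈ omegaLimitSet ϑ ψ q u₀) :
    ∃ w : ℝ → H, IsCompleteTraj ϑ ψ θ w ∧ w 0 = v ∧
      ∀ s, (ϑ s θ, w s) ∈ omegaLimitSet ϑ ψ q u₀ := by
  obtain ⟨γ, hγc, hγ0, hγ, hγω⟩ :=
    (hcoc.isSemiflow_skewProduct hϑ).exists_orbit_through_mapClusterPt (x := (q, u₀))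
    hK ((eventually_ge_atTop 0).mono fun t ht => huK t ht) (mem_omegaLimitSet_iff.1 hv)
  have hbase : ∀ s, (γ s).1 = ϑ s θ := by
    intro s
    rcases le_total 0 s with hs | hs
    · simpa [skewProduct, hγ0] using congrArg Prod.fst (hγ s 0 hs)
    · have h := congrArg Prod.fst (hγ (-s) s (neg_nonneg.2 hs))
      simp only [neg_add_cancel, hγ0, skewProduct] at h
      rw [h, ← hϑ.2.1, add_neg_cancel, hϑ.1]
  have hγ' : ∀ s, γ s = (ϑ s θ, (γ s).2) := fun s => Prod.ext (hbase s) rfl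
  refine ⟨fun s => (γ s).2, ⟨continuous_snd.comp hγc, fun t s ht => ?_⟩, by simp [hγ0],
    fun s => ?_⟩
  · show (γ (t + s)).2 = ψ t (ϑ s θ) (γ s).2
    rw [hγ t s ht, skewProduct, hbase]
  · rw [← hγ']; exact mem_omegaLimitSet_iff.2 (hγω s)

theorem exists_norm_sub_le_of_mem_omegaLimitSet (hK : IsCompact K)
    (huK : ∀ t ≥ 0, (ϑ t q, ψ t q u₀) ∈ K) {θ₁ θ₂ : ℝ → Q} {w₁ w₂ : ℝ → H}
    (hw₁ : ∀ t, (θ₁ t, w₁ t) ∈ omegaLimitSet ϑ ψ q u₀)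
    (hw₂ : ∀ t, (θ₂ t, w₂ t) ∈ omegaLimitSet ϑ ψ q u₀) : ∃ M, ∀ t, ‖w₁ t - w₂ t‖ ≤ M := by
  obtain ⟨M, hM⟩ := isBounded_iff_forall_norm_le.1 (hK.image continuous_snd).isBounded
  have hω := omegaLimitSet_subset hK.isClosed huK
  exact ⟨M + M, fun t => (norm_sub_le _ _).trans
    (add_le_add (hM _ ⟨_, hω (hw₁ t), rfl⟩) (hM _ ⟨_, hω (hw₂ t), rfl⟩))⟩

variable [CompleteSpace H] {P Pi : H →L[ℝ] H} {Hplus Hminus : Submodule ℝ H} {δ ν : ℝ}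

theorem injOn_orthProj_omegaLimitSet_fibre (hϑ : IsFlow ϑ) (hcoc : IsCocycle ϑ ψ) (hK : IsCompact K)
    (huK : ∀ t ≥ 0, (ϑ t q, ψ t q u₀) ∈ K) (h1 : HypH1 P Hplus Hminus) (h3 : HypH3 ψ P δ ν)
    (hPi : IsOrthProjOnto Hminus Pi) (θ : Q) :
    InjOn Pi {v | (θ, v) ∈ omegaLimitSet ϑ ψ q u₀} := by
  intro v₁ hv₁ v₂ hv₂ h
  obtain ⟨w₁, hw₁, rfl, hw₁ω⟩ := exists_completeTraj_of_mem_omegaLimitSet hϑ hcoc hK huK hv₁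
  obtain ⟨w₂, hw₂, rfl, hw₂ω⟩ := exists_completeTraj_of_mem_omegaLimitSet hϑ hcoc hK huK hv₂
  obtain ⟨M, hM⟩ := exists_norm_sub_le_of_mem_omegaLimitSet hK huK hw₁ω hw₂ω
  exact h3.apply_eq_of_orthProj_apply_eq h1 hPi hw₁ hw₂ hM h

theorem inner_apply_lt_of_mem_omegaLimitSet (hϑ : IsFlow ϑ) (hcoc : IsCocycle ϑ ψ)
    (hK : IsCompact K) (huK : ∀ t ≥ 0, (ϑ t q, ψ t q u₀) ∈ K) (h1 : HypH1 P Hplus Hminus)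
    (h3 : HypH3 ψ P δ ν) (hPi : IsOrthProjOnto Hminus Pi) {e : H}
    (hPie : ∀ x, Pi x = ⟪e, x⟫ • e) (hv₁ : (θ, v₁) ∈ omegaLimitSet ϑ ψ q u₀)
    (hv₂ : (θ, v₂) ∈ omegaLimitSet ϑ ψ q u₀) (hlt : ⟪e, v₁⟫ < ⟪e, v₂⟫) {t : ℝ} (ht : 0 ≤ t) :
    ⟪e, ψ t θ v₁⟫ < ⟪e, ψ t θ v₂⟫ := by
  obtain ⟨w₁, hw₁, rfl, hw₁ω⟩ := exists_completeTraj_of_mem_omegaLimitSet hϑ hcoc hK huK hv₁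
  obtain ⟨w₂, hw₂, rfl, hw₂ω⟩ := exists_completeTraj_of_mem_omegaLimitSet hϑ hcoc hK huK hv₂
  obtain ⟨M, hM⟩ := exists_norm_sub_le_of_mem_omegaLimitSet hK huK hw₁ω hw₂ω
  have hψ : ∀ {w}, IsCompleteTraj ϑ ψ θ w → ψ t θ (w 0) = w t := fun hw => by
    simpa [hϑ.1] using (hw.2 t 0 ht).symm
  rw [hψ hw₁, hψ hw₂, ← sub_pos]
  set f := fun s => ⟪e, w₂ s⟫ - ⟪e, w₁ s⟫
  have hf : Continuous f := by have := hw₁.1; have := hw₂.1; fun_prop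
  by_contra! hft
  obtain ⟨s, hs, hfs⟩ := intermediate_value_Icc' ht hf.continuousOn ⟨hft, (sub_pos.2 hlt).le⟩
  have heq : w₁ s = w₂ s := h3.apply_eq_of_orthProj_apply_eq h1 hPi hw₁ hw₂ hM <| by
    rw [hPie, hPie, sub_eq_zero.1 hfs]
  exact hlt.ne (by rw [h3.apply_eq_of_apply_eq_of_le hw₁ hw₂ hM hs.1 heq])

end OmegaLimit

theorem isFlow_circleFlow (σ : ℝ) : IsFlow (circleFlow σ) :=
  ⟨fun θ => by simp [circleFlow], fun t s θ => by simp only [circleFlow, AddCircle.coe_add]; abel,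
    continuous_snd.add ((AddCircle.continuous_mk' σ).comp continuous_fst)⟩

theorem circleFlow_nat_mul_add {σ : ℝ} (n : ℕ) (τ : ℝ) (q : AddCircle σ) :
    circleFlow σ (n * σ + τ) q = circleFlow σ τ q := by
  rw [circleFlow, circleFlow, AddCircle.coe_add, ← nsmul_eq_mul, AddCircle.coe_nsmul,
    AddCircle.coe_period, smul_zero, zero_add]

theorem exists_nonneg_circleFlow_eq {σ : ℝ} (hσ : 0 < σ) (q θ : AddCircle σ) :
    ∃ τ, 0 ≤ τ ∧ circleFlow σ τ q = θ := by
  have := Fact.mk hσ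
  obtain ⟨τ, hτ, hτθ⟩ := AddCircle.eq_coe_Ico (θ - q)
  exact ⟨τ, hτ.1, by rw [circleFlow, hτθ, add_sub_cancel]⟩

theorem sub_nat_floor_div_mul_mem_Ico {a σ : ℝ} (ha : 0 ≤ a) (hσ : 0 < σ) :
    a - ⌊a / σ⌋₊ * σ ∈ Ico 0 σ := by
  have h₁ := Nat.floor_le (div_nonneg ha hσ.le)
  have h₂ := Nat.lt_floor_add_one (a / σ)
  rw [le_div_iff₀ hσ] at h₁
  rw [div_lt_iff₀ hσ] at h₂
  constructor <;> linarith

theorem eq_zero_or_eq_period_of_coe_eq_zero {σ e : ℝ} (hσ : 0 < σ) (he : e ∈ Icc 0 σ)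
    (h : (e : AddCircle σ) = 0) : e = 0 ∨ e = σ := by
  have := Fact.mk hσ
  rcases he.2.lt_or_eq with he' | he'
  · exact .inl ((AddCircle.coe_eq_zero_iff_of_mem_Ico ⟨he.1, he'⟩).1 h)
  · exact .inr he'

def sampledOrbit {σ : ℝ} (ψ : ℝ → AddCircle σ → H → H) (q : AddCircle σ) (u₀ : H) (τ : ℝ)
    (n : ℕ) : H :=
  ψ (n * σ + τ) q u₀

section Periodic

variable {σ : ℝ} {ψ : ℝ → AddCircle σ → H → H} {q θ : AddCircle σ} {u₀ v : H}
  {K : Set (AddCircle σ × H)} {τ : ℝ}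

theorem sampledOrbit_mem_image_snd (hσ : 0 < σ) (hτ : 0 ≤ τ)
    (huK : ∀ t ≥ 0, (circleFlow σ t q, ψ t q u₀) ∈ K) (n : ℕ) :
    sampledOrbit ψ q u₀ τ n ∈ Prod.snd '' K :=
  ⟨_, huK _ (by positivity), rfl⟩

theorem skewProduct_nat_mul_add (hθ : circleFlow σ τ q = θ) (n : ℕ) :
    skewProduct (circleFlow σ) ψ (n * σ + τ) (q, u₀) = (θ, sampledOrbit ψ q u₀ τ n) := by
  rw [skewProduct, circleFlow_nat_mul_add, hθ]; rfl

variable [NormedAddCommGroup H]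

theorem sampledOrbit_succ (hσ : 0 < σ) (hcoc : IsCocycle (circleFlow σ) ψ) (hτ : 0 ≤ τ)
    (hθ : circleFlow σ τ q = θ) (n : ℕ) :
    sampledOrbit ψ q u₀ τ (n + 1) = ψ σ θ (sampledOrbit ψ q u₀ τ n) := by
  have := congrArg Prod.snd ((hcoc.isSemiflow_skewProduct (isFlow_circleFlow σ)).map_add σ
    (n * σ + τ) hσ.le (by positivity) (q, u₀))
  rwa [skewProduct_nat_mul_add hθ, show σ + (n * σ + τ) = ↑(n + 1) * σ + τ by push_cast; ring,
    skewProduct_nat_mul_add hθ] at this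

variable [InnerProductSpace ℝ H]

theorem mem_omegaLimitSet_of_mapClusterPt (hσ : 0 < σ) (hθ : circleFlow σ τ q = θ)
    (hv : MapClusterPt v atTop (sampledOrbit ψ q u₀ τ)) :
    (θ, v) ∈ omegaLimitSet (circleFlow σ) ψ q u₀ := by
  refine mem_omegaLimitSet_iff.2 (MapClusterPt.of_comp (φ := fun n : ℕ => n * σ + τ)
    (tendsto_atTop_add_const_right _ τ (tendsto_natCast_atTop_atTop.atTop_mul_const hσ)) ?_)
  rw [show (skewProduct (circleFlow σ) ψ · (q, u₀)) ∘ (fun n : ℕ => n * σ + τ) =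
    (fun w => (θ, w)) ∘ sampledOrbit ψ q u₀ τ from funext (skewProduct_nat_mul_add hθ)]
  exact hv.continuousAt_comp (by fun_prop)

theorem mapClusterPt_sampledOrbit_of_mem_omegaLimitSet (hσ : 0 < σ)
    (hcoc : IsCocycle (circleFlow σ) ψ) (hK : IsCompact K)
    (huK : ∀ t ≥ 0, (circleFlow σ t q, ψ t q u₀) ∈ K) (hτ : 0 ≤ τ) (hθ : circleFlow σ τ q = θ)
    (hv : (θ, v) ∈ omegaLimitSet (circleFlow σ) ψ q u₀) :
    MapClusterPt v atTop (sampledOrbit ψ q u₀ τ) := by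
  have hΦ := hcoc.isSemiflow_skewProduct (isFlow_circleFlow σ)
  set x := sampledOrbit ψ q u₀ τ
  obtain ⟨U, hU, hUv⟩ := mapClusterPt_iff_ultrafilter.1 (mem_omegaLimitSet_iff.1 hv)
  -- Split a large time as `s = E s + (N s * σ + τ)` with `E s ∈ [0, σ)`. In the limit `E s → e`
  -- with `θ + e = θ`, so either `e = 0` and `v` is a limit of `x`, or `e = σ` and `v = ψ σ θ z`.
  set N : ℝ → ℕ := fun s => ⌊(s - τ) / σ⌋₊
  set E : ℝ → ℝ := fun s => s - τ - N s * σ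
  have hτU : ∀ᶠ s in (U : Filter ℝ), τ ≤ s := hU (eventually_ge_atTop τ)
  have hE : ∀ᶠ s in (U : Filter ℝ), E s ∈ Icc 0 σ := hτU.mono fun s hs =>
    Ico_subset_Icc_self (sub_nat_floor_div_mul_mem_Ico (sub_nonneg.2 hs) hσ)
  obtain ⟨⟨e, z⟩, ⟨he, -⟩, hez⟩ :=
    (isCompact_Icc.prod (hK.image continuous_snd)).ultrafilter_le_nhds'
      (U.map fun s => (E s, x (N s)))
      (hE.mono fun s hs => ⟨hs, sampledOrbit_mem_image_snd hσ hτ huK _⟩)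
  have hN : Tendsto N U atTop := tendsto_nat_floor_atTop.comp <|
    ((tendsto_atTop_add_const_right _ (-τ) tendsto_id).atTop_div_const hσ).comp hU
  have hz : MapClusterPt z atTop x :=
    ((continuous_snd.tendsto _).comp hez).mapClusterPt.of_comp hN
  have heq : skewProduct (circleFlow σ) ψ e (θ, z) = (θ, v) := by
    refine tendsto_nhds_unique ((hΦ.tendsto_apply he.1 (hE.mono fun s hs => hs.1)
      ((continuous_fst.tendsto _).comp hez)
      (tendsto_const_nhds.prodMk_nhds ((continuous_snd.tendsto _).comp hez))).congr' ?_) hUv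
    filter_upwards [hE] with s hs
    simp only [Function.comp_apply]
    rw [← skewProduct_nat_mul_add hθ, ← hΦ.map_add _ _ hs.1 (by positivity)]
    congr 1
    simp only [E]
    ring
  rcases eq_zero_or_eq_period_of_coe_eq_zero hσ he
    (by simpa [skewProduct, circleFlow] using congrArg Prod.fst heq) with rfl | he
  · have hzv : z = v := by simpa [skewProduct, hcoc.1] using congrArg Prod.snd heq
    rwa [← hzv]
  · have hTz : ψ σ θ z = v := by rw [← he]; exact congrArg Prod.snd heq
    rw [← hTz]
    refine MapClusterPt.of_comp (tendsto_add_atTop_nat 1) ?_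
    rw [show x ∘ (· + 1) = ψ σ θ ∘ x from funext (sampledOrbit_succ hσ hcoc hτ hθ)]
    exact hz.continuousAt_comp (hcoc.continuous_apply hσ.le θ).continuousAt

theorem nonempty_omegaLimitSet_fibre (hσ : 0 < σ) (hK : IsCompact K)
    (huK : ∀ t ≥ 0, (circleFlow σ t q, ψ t q u₀) ∈ K) (θ : AddCircle σ) :
    {v | (θ, v) ∈ omegaLimitSet (circleFlow σ) ψ q u₀}.Nonempty := by
  obtain ⟨τ, hτ, hθ⟩ := exists_nonneg_circleFlow_eq hσ q θ
  obtain ⟨v, -, hv⟩ := (hK.image continuous_snd).exists_mapClusterPt (f := atTop)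
    (tendsto_principal.2 (.of_forall (sampledOrbit_mem_image_snd hσ hτ huK)))
  exact ⟨v, mem_omegaLimitSet_of_mapClusterPt hσ hθ hv⟩

theorem exists_downcrossing_of_mem_omegaLimitSet (hσ : 0 < σ) (hcoc : IsCocycle (circleFlow σ) ψ)
    (hK : IsCompact K) (huK : ∀ t ≥ 0, (circleFlow σ t q, ψ t q u₀) ∈ K) {φ : H → ℝ}
    (hφ : Continuous φ) {a b : H} (ha : (θ, a) ∈ omegaLimitSet (circleFlow σ) ψ q u₀)
    (hb : (θ, b) ∈ omegaLimitSet (circleFlow σ) ψ q u₀) {c : ℝ} (hac : φ a < c)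
    (hcb : c < φ b) :
    ∃ y, (θ, y) ∈ omegaLimitSet (circleFlow σ) ψ q u₀ ∧ φ (ψ σ θ y) ≤ c ∧ c ≤ φ y := by
  obtain ⟨τ, hτ, hθ⟩ := exists_nonneg_circleFlow_eq hσ q θ
  have hcl := fun {v} (hv : (θ, v) ∈ omegaLimitSet (circleFlow σ) ψ q u₀) =>
    mapClusterPt_sampledOrbit_of_mem_omegaLimitSet hσ hcoc hK huK hτ hθ hv
  obtain ⟨y, hy, hTy, hcy⟩ := exists_mapClusterPt_downcrossing (hK.image continuous_snd)
    (hcoc.continuous_apply hσ.le θ) (sampledOrbit_mem_image_snd hσ hτ huK)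
    (sampledOrbit_succ hσ hcoc hτ hθ) hφ
    ((hcl hb).frequently (hφ.continuousAt.eventually (lt_mem_nhds hcb)))
    ((hcl ha).frequently ((hφ.continuousAt.eventually (gt_mem_nhds hac)).mono fun _ => le_of_lt))
  exact ⟨y, mem_omegaLimitSet_of_mapClusterPt hσ hθ hy, hTy, hcy⟩

variable {P : H →L[ℝ] H} {δ ν : ℝ}

theorem exists_periodic_completeTraj_of_mem_omegaLimitSet (hσ : 0 < σ)
    (hcoc : IsCocycle (circleFlow σ) ψ) (hK : IsCompact K)
    (huK : ∀ t ≥ 0, (circleFlow σ t q, ψ t q u₀) ∈ K) (h3 : HypH3 ψ P δ ν)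
    (hv : (θ, v) ∈ omegaLimitSet (circleFlow σ) ψ q u₀) (hfix : ψ σ θ v = v) :
    ∃ w : ℝ → H, IsCompleteTraj (circleFlow σ) ψ θ w ∧ (∀ t, w (t + σ) = w t) ∧ w 0 = v := by
  have hϑ := isFlow_circleFlow σ
  have hperiod : ∀ t, circleFlow σ (t + σ) θ = circleFlow σ t θ := fun t => by
    simp [circleFlow]
  obtain ⟨w, hw, hw0, hwω⟩ := exists_completeTraj_of_mem_omegaLimitSet hϑ hcoc hK huK hv
  have hwσ : IsCompleteTraj (circleFlow σ) ψ θ (fun t => w (t + σ)) := by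
    simpa [circleFlow, AddCircle.coe_period] using hw.comp_add_const hϑ σ
  obtain ⟨M, hM⟩ := exists_norm_sub_le_of_mem_omegaLimitSet hK huK
    (fun t => by simpa only [hperiod] using hwω (t + σ)) hwω
  -- `w` and its `σ`-shift are bounded complete trajectories over `θ` through `v = T v`.
  have hσ0 : w (0 + σ) = w 0 := by
    rw [zero_add, ← add_zero σ, hw.2 σ 0 hσ.le, hw0, hϑ.1, hfix]
  exact ⟨w, hw, congrFun (h3.eq_of_apply_zero_eq hwσ hw hM hσ0), hw0⟩

theorem ordConnected_inner_image_omegaLimitSet_fibre (hσ : 0 < σ)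
    (hcoc : IsCocycle (circleFlow σ) ψ) (hK : IsCompact K)
    (huK : ∀ t ≥ 0, (circleFlow σ t q, ψ t q u₀) ∈ K)
    (hfix : ∀ v, (θ, v) ∈ omegaLimitSet (circleFlow σ) ψ q u₀ → ψ σ θ v = v) (e : H) :
    ((⟪e, ·⟫) '' {v | (θ, v) ∈ omegaLimitSet (circleFlow σ) ψ q u₀}).OrdConnected := by
  refine ⟨?_⟩
  rintro _ ⟨a, ha, rfl⟩ _ ⟨b, hb, rfl⟩ c ⟨hac, hcb⟩
  rcases hac.eq_or_lt with rfl | hac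
  · exact ⟨a, ha, rfl⟩
  rcases hcb.eq_or_lt with rfl | hcb
  · exact ⟨b, hb, rfl⟩
  obtain ⟨y, hy, hTy, hcy⟩ := exists_downcrossing_of_mem_omegaLimitSet hσ hcoc hK huK
    (φ := (⟪e, ·⟫)) (by fun_prop) ha hb hac hcb
  exact ⟨y, hy, le_antisymm (hfix y hy ▸ hTy) hcy⟩

variable [CompleteSpace H] {Pi : H →L[ℝ] H} {Hplus Hminus : Submodule ℝ H}

theorem apply_period_eq_self_of_mem_omegaLimitSet (hσ : 0 < σ) (hcoc : IsCocycle (circleFlow σ) ψ)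
    (hK : IsCompact K) (huK : ∀ t ≥ 0, (circleFlow σ t q, ψ t q u₀) ∈ K)
    (h1 : HypH1 P Hplus Hminus) (h3 : HypH3 ψ P δ ν) (hPi : IsOrthProjOnto Hminus Pi) {e : H}
    (hPie : ∀ x, Pi x = ⟪e, x⟫ • e) (hv : (θ, v) ∈ omegaLimitSet (circleFlow σ) ψ q u₀) :
    ψ σ θ v = v := by
  have hϑ := isFlow_circleFlow σ
  have hTv : (θ, ψ σ θ v) ∈ omegaLimitSet (circleFlow σ) ψ q u₀ := by
    simpa [circleFlow, AddCircle.coe_period] using skewProduct_mem_omegaLimitSet hϑ hcoc hv hσ.le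
  -- If `⟪e', v⟫ < ⟪e', T v⟫`, a downcrossing `y` of the middle level has `⟪e', v⟫ < ⟪e', y⟫` but
  -- `⟪e', T y⟫ < ⟪e', T v⟫`, against monotonicity of `T`; `e' = -e` gives the reverse inequality.
  have hle : ∀ e' : H, (∀ x, Pi x = ⟪e', x⟫ • e') → ⟪e', ψ σ θ v⟫ ≤ ⟪e', v⟫ := by
    intro e' hPie'
    by_contra! hlt
    obtain ⟨y, hy, hTy, hcy⟩ := exists_downcrossing_of_mem_omegaLimitSet hσ hcoc hK huK
      (φ := (⟪e', ·⟫)) (by fun_prop) hv hTv (c := (⟪e', v⟫ + ⟪e', ψ σ θ v⟫) / 2)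
      (by linarith) (by linarith)
    have := inner_apply_lt_of_mem_omegaLimitSet hϑ hcoc hK huK h1 h3 hPi hPie' hv hy
      (by linarith) hσ.le
    linarith
  have h₁ := hle e hPie
  have h₂ := hle (-e) fun x => by rw [hPie, inner_neg_left, neg_smul, smul_neg, neg_neg]
  rw [inner_neg_left, inner_neg_left, neg_le_neg_iff] at h₂
  exact injOn_orthProj_omegaLimitSet_fibre hϑ hcoc hK huK h1 h3 hPi θ hTv hv
    (by rw [hPie, hPie, le_antisymm h₁ h₂])

end Periodic

theorem omega_limit_set_structure_general
    {H : Type*} [NormedAddCommGroup H] [InnerProductSpace ℝ H]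
    [CompleteSpace H]
    (σ : ℝ) (hσ : 0 < σ)
    (ψ : ℝ → AddCircle σ → H → H)
    (hcoc : IsCocycle (circleFlow σ) ψ)
    (P : H →L[ℝ] H) (Hplus Hminus : Submodule ℝ H)
    (h1 : HypH1 P Hplus Hminus)
    (h2 : HypH2 Hminus 1)
    (δ ν : ℝ) (h3 : HypH3 ψ P δ ν)
    (Pi : H →L[ℝ] H) (hPi : IsOrthProjOnto Hminus Pi)
    (q : AddCircle σ) (u₀ : H)
    (hprecompact : IsCompact
      (closure ((fun t => (circleFlow σ t q, ψ t q u₀)) '' Set.Ici (0:ℝ)))) :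
    (∀ p ∈ omegaLimitSet (circleFlow σ) ψ q u₀,
      ∃ w : ℝ → H, IsCompleteTraj (circleFlow σ) ψ p.1 w ∧
        (∀ t : ℝ, w (t + σ) = w t) ∧ w 0 = p.2) ∧
    ∀ q' : AddCircle σ,
      ({v : H | (q', v) ∈ omegaLimitSet (circleFlow σ) ψ q u₀}).Nonempty ∧
      IsCompact {v : H | (q', v) ∈ omegaLimitSet (circleFlow σ) ψ q u₀} ∧
      Set.InjOn (⇑Pi) {v : H | (q', v) ∈ omegaLimitSet (circleFlow σ) ψ q u₀} ∧
      IsConnected (Pi '' {v : H | (q', v) ∈ omegaLimitSet (circleFlow σ) ψ q u₀}) := by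
  have hϑ := isFlow_circleFlow σ
  have huK : ∀ t ≥ 0, (circleFlow σ t q, ψ t q u₀) ∈
      closure ((fun t => (circleFlow σ t q, ψ t q u₀)) '' Set.Ici (0:ℝ)) :=
    fun t ht => subset_closure ⟨t, ht, rfl⟩
  obtain ⟨e, hPie⟩ := h2.exists_orthProj_eq_inner_smul hPi
  have hfix : ∀ θ v, (θ, v) ∈ omegaLimitSet (circleFlow σ) ψ q u₀ → ψ σ θ v = v := fun _ _ =>
    apply_period_eq_self_of_mem_omegaLimitSet hσ hcoc hprecompact huK h1 h3 hPi hPie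
  refine ⟨fun p hp => exists_periodic_completeTraj_of_mem_omegaLimitSet hσ hcoc hprecompact huK
    h3 hp (hfix _ _ hp), fun q' => ⟨nonempty_omegaLimitSet_fibre hσ hprecompact huK q',
    isCompact_omegaLimitSet_fibre hprecompact huK q',
    injOn_orthProj_omegaLimitSet_fibre hϑ hcoc hprecompact huK h1 h3 hPi q', ?_⟩⟩
  have hconn : IsConnected ((⟪e, ·⟫) '' {v | (q', v) ∈ omegaLimitSet (circleFlow σ) ψ q u₀}) :=
    ⟨(nonempty_omegaLimitSet_fibre hσ hprecompact huK q').image _,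
      (ordConnected_inner_image_omegaLimitSet_fibre hσ hcoc hprecompact huK (hfix q')
        e).isPreconnected⟩
  rw [Set.image_congr fun v _ => hPie v, ← Set.image_image (· • e)]
  exact hconn.image _ (by fun_prop : Continuous (· • e : ℝ → H)).continuousOn

/-- Lemma 6: for a σ-periodic cocycle under (H1), (H2) with `j = 1` and (H3), the ω-limit
set of a precompact semi-trajectory of the skew-product semiflow consists of σ-periodic
trajectories, and each fibre is (via `Π`) a nonempty compact connected subset of the
one-dimensional space `H⁻`, i.e. a closed segment. -/
theorem omega_limit_set_structure
    {H : Type*} [NormedAddCommGroup H] [InnerProductSpace ℝ H]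
    [CompleteSpace H] [TopologicalSpace.SeparableSpace H]
    (σ : ℝ) (hσ : 0 < σ)
    (ψ : ℝ → AddCircle σ → H → H)
    (hcoc : IsCocycle (circleFlow σ) ψ)
    (P : H →L[ℝ] H) (Hplus Hminus : Submodule ℝ H)
    (h1 : HypH1 P Hplus Hminus)
    (h2 : HypH2 Hminus 1)
    (δ ν : ℝ) (h3 : HypH3 ψ P δ ν)
    (Pi : H →L[ℝ] H) (hPi : IsOrthProjOnto Hminus Pi)
    (q : AddCircle σ) (u₀ : H)
    (hprecompact : IsCompact
      (closure ((fun t => (circleFlow σ t q, ψ t q u₀)) '' Set.Ici (0:ℝ)))) :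
    (∀ p ∈ omegaLimitSet (circleFlow σ) ψ q u₀,
      ∃ w : ℝ → H, IsCompleteTraj (circleFlow σ) ψ p.1 w ∧
        (∀ t : ℝ, w (t + σ) = w t) ∧ w 0 = p.2) ∧
    ∀ q' : AddCircle σ,
      ({v : H | (q', v) ∈ omegaLimitSet (circleFlow σ) ψ q u₀}).Nonempty ∧
      IsCompact {v : H | (q', v) ∈ omegaLimitSet (circleFlow σ) ψ q u₀} ∧
      Set.InjOn (⇑Pi) {v : H | (q', v) ∈ omegaLimitSet (circleFlow σ) ψ q u₀} ∧
      IsConnected (Pi '' {v : H | (q', v) ∈ omegaLimitSet (circleFlow σ) ψ q u₀}) :=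
  omega_limit_set_structure_general σ hσ ψ hcoc P Hplus Hminus h1 h2 δ ν h3 Pi hPi q u₀ hprecompact
end
end

section
/- Suppose the cocycle (ψ,ϑ) is σ-periodic and (H1), (H2) with j = 1, (H3) and (COM3) hold. Then every isolated Lyapunov stable σ-periodic trajectory v* at q is asymptotically Lyapunov stable: there exists η > 0 such that every semi-trajectory u(t) = ψ^t(q,u₀) with |u₀ − v*(0)| < η satisfies u(t) − v*(t) → 0 as t → +∞. -/
/-! The period map `T = ψ σ q` is studied on the set `Ω` of cluster points of the orbit `Tⁿ u₀`:
by (COM3) and stability it is compact, lies near `v 0`, and `T Ω = Ω`. Any two points of `Ω`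
have backward `T`-orbits in the bounded set `Ω`, so (H3) forces `V(a - b) < 0` along the
trajectories through `a ≠ b`; as `dim H⁻ = 1`, this means `⟪ψ t q a - ψ t q b, e⟫ ≠ 0` for a
vector `e` spanning `H⁻`. Hence `a ↦ ⟪a, e⟫` is injective on `Ω` and `T` preserves the order it
induces, so the points of `Ω` where it is maximal or minimal are fixed by `T`. Fixed points of
`T` start σ-periodic trajectories, so by isolation both are `v 0`; thus `Ω = {v 0}`, and
stability turns `Tⁿ u₀ → v 0` into convergence of the whole semi-trajectory. -/

open MeasureTheory Set Bornology Filter Topology RealInnerProductSpace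

noncomputable section

variable {Q H : Type*}

open Function

theorem circleFlow_period (σ : ℝ) (q : AddCircle σ) : circleFlow σ σ q = q := by
  simp [circleFlow]

theorem circleFlow_periodic (σ : ℝ) (q : AddCircle σ) :
    Periodic (fun t => circleFlow σ t q) σ := fun t => by
  simp [circleFlow]

theorem HypH1.exists_inner_ne_zero_of_inner_neg [NormedAddCommGroup H] [InnerProductSpace ℝ H]
    [CompleteSpace H] {P : H →L[ℝ] H} {Hplus Hminus : Submodule ℝ H}
    (h1 : HypH1 P Hplus Hminus) (h2 : HypH2 Hminus 1) :
    ∃ e : H, ∀ d : H, ⟪P d, d⟫ < 0 → ⟪d, e⟫ ≠ 0 := by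
  obtain ⟨e, -, he⟩ := finrank_eq_one_iff'.mp h2.2
  refine ⟨e, fun d hd hde => hd.not_ge ?_⟩
  have : d ∈ Hplus := by
    have : CompleteSpace Hplus := h1.closed_plus.completeSpace_coe
    rw [← Submodule.orthogonal_orthogonal Hplus, ← h1.orth, Submodule.mem_orthogonal]
    intro w hw
    obtain ⟨c, hc⟩ := he ⟨w, hw⟩
    rw [← show c • (e : H) = w from congrArg Subtype.val hc, real_inner_smul_left,
      real_inner_comm, hde, mul_zero]
  rcases eq_or_ne d 0 with rfl | hd0
  · simp
  · exact (h1.pos d this hd0).le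

section Iterate

variable {X : Type*} [TopologicalSpace X] {T : X → X} {u₀ : X}

theorem mapClusterPt_comp_iterate_iff {y : X} :
    MapClusterPt y atTop (T ∘ (T^[·] u₀)) ↔ MapClusterPt y atTop (T^[·] u₀) := by
  rw [show T ∘ (T^[·] u₀) = (T^[·] u₀) ∘ (· + 1) from
      funext fun n => (iterate_succ_apply' T n u₀).symm,
    mapClusterPt_comp, map_add_atTop_eq_nat]

theorem mapsTo_mapClusterPt_iterate (hT : Continuous T) :
    MapsTo T {y | MapClusterPt y atTop (T^[·] u₀)} {y | MapClusterPt y atTop (T^[·] u₀)} :=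
  fun _ hy => mapClusterPt_comp_iterate_iff.mp (hy.continuousAt_comp hT.continuousAt)

theorem surjOn_mapClusterPt_iterate [T2Space X] (hT : Continuous T) {K : Set X}
    (hK : IsCompact K) (horbit : ∀ n, T^[n] u₀ ∈ K) :
    SurjOn T {y | MapClusterPt y atTop (T^[·] u₀)} {y | MapClusterPt y atTop (T^[·] u₀)} := by
  intro a ha
  -- a cluster point of the orbit along the filter on which `T ∘ orbit → a` is a preimage of `a`
  set F := atTop ⊓ comap (T ∘ (T^[·] u₀)) (𝓝 a)
  have : F.NeBot := by
    rw [← map_neBot_iff (T ∘ (T^[·] u₀)), Filter.push_pull, inf_comm]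
    exact mapClusterPt_comp_iterate_iff.mpr ha
  obtain ⟨b, -, hb⟩ := hK.exists_mapClusterPt (f := F) (u := (T^[·] u₀))
    (tendsto_principal.mpr (Eventually.of_forall horbit))
  refine ⟨b, hb.mono inf_le_left, eq_of_nhds_neBot ?_⟩
  exact (hb.continuousAt_comp hT.continuousAt).clusterPt.mono
    (tendsto_comap.mono_left inf_le_right)

theorem IsCompact.isCompact_setOf_mapClusterPt [T2Space X] {ι : Type*} {l : Filter ι}
    {x : ι → X} {K : Set X} (hK : IsCompact K) (hx : ∀ᶠ n in l, x n ∈ K) :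
    IsCompact {y | MapClusterPt y l x} :=
  hK.of_isClosed_subset isClosed_setOfPred_clusterPt fun _ hy =>
    hK.isClosed.mem_of_mapClusterPt hy hx

end Iterate

section ExtremalFixedPoints

variable {α β : Type*} [LinearOrder β] {T : α → α} {Ω : Set α} {φ : α → β} {m : α}

theorem IsMaxOn.isFixedPt_of_surjOn (hmaps : MapsTo T Ω Ω) (hsurj : SurjOn T Ω Ω)
    (hinj : InjOn φ Ω) (hmono : ∀ a ∈ Ω, ∀ b ∈ Ω, φ a < φ b → φ (T a) < φ (T b))
    (hm : m ∈ Ω) (hmax : IsMaxOn φ Ω m) : IsFixedPt T m := by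
  obtain ⟨z, hz, rfl⟩ := hsurj hm
  rcases eq_or_ne z (T z) with h | h
  · exact (congrArg T h).symm
  · have hlt : φ z < φ (T z) := (hmax hz).lt_of_ne (hinj.ne hz hm h)
    exact absurd (hmono z hz _ hm hlt) (hmax (hmaps hm)).not_gt

theorem IsMinOn.isFixedPt_of_surjOn (hmaps : MapsTo T Ω Ω) (hsurj : SurjOn T Ω Ω)
    (hinj : InjOn φ Ω) (hmono : ∀ a ∈ Ω, ∀ b ∈ Ω, φ a < φ b → φ (T a) < φ (T b))
    (hm : m ∈ Ω) (hmin : IsMinOn φ Ω m) : IsFixedPt T m :=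
  IsMaxOn.isFixedPt_of_surjOn (φ := OrderDual.toDual ∘ φ) hmaps hsurj
    (OrderDual.toDual.injective.comp_injOn hinj) (fun a ha b hb h => hmono b hb a ha h) hm hmin

theorem subset_singleton_of_forall_isFixedPt_eq [TopologicalSpace α] [TopologicalSpace β]
    [OrderClosedTopology β] (hΩ : IsCompact Ω) (hφ : ContinuousOn φ Ω) (hmaps : MapsTo T Ω Ω)
    (hsurj : SurjOn T Ω Ω) (hinj : InjOn φ Ω)
    (hmono : ∀ a ∈ Ω, ∀ b ∈ Ω, φ a < φ b → φ (T a) < φ (T b)) {c : α}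
    (hfix : ∀ p ∈ Ω, IsFixedPt T p → p = c) : Ω ⊆ {c} := by
  intro a ha
  obtain ⟨m, hm, hmax⟩ := hΩ.exists_isMaxOn ⟨a, ha⟩ hφ
  obtain ⟨m', hm', hmin⟩ := hΩ.exists_isMinOn ⟨a, ha⟩ hφ
  obtain rfl := hfix m hm (hmax.isFixedPt_of_surjOn hmaps hsurj hinj hmono hm)
  obtain rfl := hfix m' hm' (hmin.isFixedPt_of_surjOn hmaps hsurj hinj hmono hm')
  exact hinj ha hm (le_antisymm (hmax ha) (hmin ha))

end ExtremalFixedPoints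

namespace IsCocycle

variable [MetricSpace Q] [NormedAddCommGroup H]
  {ϑ : ℝ → Q → Q} {ψ : ℝ → Q → H → H} {q : Q} {σ t : ℝ}

theorem continuousOn_orbit (hψ : IsCocycle ϑ ψ) (q : Q) (u : H) :
    ContinuousOn (fun t => ψ t q u) (Ici 0) :=
  hψ.2.2.comp (f := fun t => (t, q, u)) (by fun_prop) fun _ ht => ht

theorem continuous_apply_s17 (hψ : IsCocycle ϑ ψ) (ht : 0 ≤ t) : Continuous (ψ t q) :=
  hψ.2.2.comp_continuous (f := fun u => (t, q, u)) (by fun_prop) fun _ => ht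

theorem apply_add_period (hψ : IsCocycle ϑ ψ) (hq : ϑ σ q = q) (hσ : 0 ≤ σ) (ht : 0 ≤ t)
    (u : H) : ψ (t + σ) q u = ψ t q (ψ σ q u) := by
  rw [hψ.2.1 t σ ht hσ, hq]

theorem apply_add_nat_mul (hψ : IsCocycle ϑ ψ) (hq : ϑ σ q = q) (hσ : 0 ≤ σ) (ht : 0 ≤ t)
    (n : ℕ) (u : H) : ψ (t + n * σ) q u = ψ t q ((ψ σ q)^[n] u) := by
  induction n generalizing u with
  | zero => simp
  | succ n ih =>
    rw [Nat.cast_succ, add_one_mul, ← add_assoc,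
      hψ.apply_add_period hq hσ (by positivity), ih, iterate_succ_apply]

theorem apply_nat_mul (hψ : IsCocycle ϑ ψ) (hq : ϑ σ q = q) (hσ : 0 ≤ σ) (n : ℕ) (u : H) :
    ψ (n * σ) q u = (ψ σ q)^[n] u := by
  simpa [hψ.1] using hψ.apply_add_nat_mul hq hσ le_rfl n u

end IsCocycle

theorem nonpos_of_forall_exp_nat_mul_le {c a M : ℝ} (hc : 0 < c)
    (h : ∀ n : ℕ, Real.exp (c * n) * a ≤ M) : a ≤ 0 := by
  by_contra! ha
  have : Tendsto (fun n : ℕ => Real.exp (c * n) * a) atTop atTop :=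
    (Real.tendsto_exp_atTop.comp
      (tendsto_natCast_atTop_atTop.const_mul_atTop hc)).atTop_mul_const ha
  obtain ⟨n, hn⟩ := (this.eventually_gt_atTop M).exists
  exact (h n).not_gt hn

theorem ContinuousLinearMap.inner_apply_self_le [NormedAddCommGroup H] [InnerProductSpace ℝ H]
    (P : H →L[ℝ] H) (d : H) : ⟪P d, d⟫ ≤ ‖P‖ * ‖d‖ ^ 2 :=
  (real_inner_le_norm _ _).trans (by nlinarith [P.le_opNorm d, norm_nonneg d])

namespace HypH3

variable [MetricSpace Q] [NormedAddCommGroup H] [InnerProductSpace ℝ H]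
  {ϑ : ℝ → Q → Q} {ψ : ℝ → Q → H → H} {q : Q} {σ : ℝ} {P : H →L[ℝ] H} {δ ν : ℝ}
  {Ω : Set H} {a b : H}

theorem inner_sub_le_zero_of_surjOn (h3 : HypH3 ψ P δ ν) (hψ : IsCocycle ϑ ψ)
    (hq : ϑ σ q = q) (hσ : 0 < σ) (hΩ : IsBounded Ω) (hsurj : SurjOn (ψ σ q) Ω Ω)
    (ha : a ∈ Ω) (hb : b ∈ Ω) : ⟪P (a - b), a - b⟫ ≤ 0 := by
  -- `a`, `b` have `ψ σ q`-iterate preimages `a'`, `b'` in `Ω` of every order `n`, and (H3) on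
  -- `[0, n σ]` gives `exp (2 ν n σ) V(a - b) ≤ V(a' - b')`, which is bounded on `Ω`
  obtain ⟨C, hC⟩ := Metric.isBounded_iff.mp hΩ
  refine nonpos_of_forall_exp_nat_mul_le (M := ‖P‖ * C ^ 2)
    (by have := h3.2.1; positivity : 0 < 2 * ν * σ) fun n => ?_
  obtain ⟨a', ha', rfl⟩ := hsurj.iterate n ha
  obtain ⟨b', hb', rfl⟩ := hsurj.iterate n hb
  have key := h3.2.2 q a' b' 0 (n * σ) le_rfl (by positivity)
  have hI : 0 ≤ ∫ s in (0 : ℝ)..(n * σ), Real.exp (2 * ν * s) * ‖ψ s q a' - ψ s q b'‖ ^ 2 :=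
    intervalIntegral.integral_nonneg (by positivity) fun _ _ => by positivity
  rw [hψ.apply_nat_mul hq hσ.le, hψ.apply_nat_mul hq hσ.le, hψ.1, hψ.1, mul_zero,
    Real.exp_zero, one_mul, show 2 * ν * (n * σ) = 2 * ν * σ * n by ring] at key
  have hC' : ‖a' - b'‖ ≤ C := dist_eq_norm a' b' ▸ hC ha' hb'
  calc _ ≤ ⟪P (a' - b'), a' - b'⟫ := by nlinarith [h3.1]
    _ ≤ ‖P‖ * ‖a' - b'‖ ^ 2 := P.inner_apply_self_le _
    _ ≤ ‖P‖ * C ^ 2 := by gcongr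

theorem inner_sub_neg_of_surjOn (h3 : HypH3 ψ P δ ν) (hψ : IsCocycle ϑ ψ)
    (hq : ϑ σ q = q) (hσ : 0 < σ) (hΩ : IsBounded Ω) (hsurj : SurjOn (ψ σ q) Ω Ω)
    (ha : a ∈ Ω) (hb : b ∈ Ω) (hab : a ≠ b) {t : ℝ} (ht : 0 ≤ t) :
    ⟪P (ψ t q a - ψ t q b), ψ t q a - ψ t q b⟫ < 0 := by
  obtain ⟨a', ha', rfl⟩ := hsurj ha
  obtain ⟨b', hb', rfl⟩ := hsurj hb
  have hV := h3.inner_sub_le_zero_of_surjOn hψ hq hσ hΩ hsurj ha' hb'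
  have key := h3.2.2 q a' b' 0 (t + σ) le_rfl (by positivity)
  -- the integrand is positive at `s = σ`, where `ψ σ q a' - ψ σ q b' = a - b`
  have hI : 0 < ∫ s in (0 : ℝ)..(t + σ), Real.exp (2 * ν * s) * ‖ψ s q a' - ψ s q b'‖ ^ 2 :=
    intervalIntegral.integral_pos (by positivity)
      ((Real.continuous_exp.comp (continuous_const_mul _)).continuousOn.mul
        (((hψ.continuousOn_orbit q a').sub (hψ.continuousOn_orbit q b')).norm.pow 2)
        |>.mono Icc_subset_Ici_self)
      (fun _ _ => by positivity)
      ⟨σ, ⟨hσ.le, by linarith⟩,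
        mul_pos (Real.exp_pos _) (pow_pos (norm_pos_iff.mpr (sub_ne_zero.mpr hab)) 2)⟩
  rw [hψ.apply_add_period hq hσ.le ht, hψ.apply_add_period hq hσ.le ht, hψ.1, hψ.1, mul_zero,
    Real.exp_zero, one_mul] at key
  exact neg_of_mul_neg_right (by nlinarith [h3.1]) (Real.exp_pos _).le

variable {e : H}

theorem injOn_inner_of_surjOn (h3 : HypH3 ψ P δ ν) (hψ : IsCocycle ϑ ψ)
    (hq : ϑ σ q = q) (hσ : 0 < σ) (hΩ : IsBounded Ω) (hsurj : SurjOn (ψ σ q) Ω Ω)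
    (he : ∀ d, ⟪P d, d⟫ < 0 → ⟪d, e⟫ ≠ 0) : InjOn (fun y => ⟪y, e⟫) Ω := by
  intro a ha b hb hab
  by_contra hne
  refine he _ (h3.inner_sub_neg_of_surjOn hψ hq hσ hΩ hsurj ha hb hne le_rfl) ?_
  simpa [hψ.1, inner_sub_left, sub_eq_zero] using hab

theorem inner_lt_inner_of_surjOn (h3 : HypH3 ψ P δ ν) (hψ : IsCocycle ϑ ψ)
    (hq : ϑ σ q = q) (hσ : 0 < σ) (hΩ : IsBounded Ω) (hsurj : SurjOn (ψ σ q) Ω Ω)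
    (he : ∀ d, ⟪P d, d⟫ < 0 → ⟪d, e⟫ ≠ 0) (ha : a ∈ Ω) (hb : b ∈ Ω) (hab : ⟪a, e⟫ < ⟪b, e⟫) :
    ⟪ψ σ q a, e⟫ < ⟪ψ σ q b, e⟫ := by
  have hne : b ≠ a := by rintro rfl; exact hab.false
  have hf : ContinuousOn (fun t => ⟪ψ t q b - ψ t q a, e⟫) (Icc 0 σ) :=
    (((hψ.continuousOn_orbit q b).sub (hψ.continuousOn_orbit q a)).inner continuousOn_const).mono
      Icc_subset_Ici_self
  by_contra! hσle
  obtain ⟨t, ht, hft⟩ := intermediate_value_Icc' hσ.le hf (show (0 : ℝ) ∈ Icc _ _ from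
    ⟨by rw [inner_sub_left]; linarith, by simp only [hψ.1, inner_sub_left]; linarith⟩)
  exact he _ (h3.inner_sub_neg_of_surjOn hψ hq hσ hΩ hsurj hb ha hne ht.1) hft

theorem subset_singleton_of_surjOn (h3 : HypH3 ψ P δ ν) (hψ : IsCocycle ϑ ψ)
    (hq : ϑ σ q = q) (hσ : 0 < σ) (hΩ : IsCompact Ω) (hmaps : MapsTo (ψ σ q) Ω Ω)
    (hsurj : SurjOn (ψ σ q) Ω Ω) (he : ∀ d, ⟪P d, d⟫ < 0 → ⟪d, e⟫ ≠ 0) {c : H}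
    (hfix : ∀ p ∈ Ω, IsFixedPt (ψ σ q) p → p = c) : Ω ⊆ {c} :=
  subset_singleton_of_forall_isFixedPt_eq hΩ (continuous_id.inner continuous_const).continuousOn
    hmaps hsurj (h3.injOn_inner_of_surjOn hψ hq hσ hΩ.isBounded hsurj he)
    (fun _ ha _ hb => h3.inner_lt_inner_of_surjOn hψ hq hσ hΩ.isBounded hsurj he ha hb) hfix

end HypH3

theorem isBounded_image_of_forall_norm_sub_le [NormedAddCommGroup H] {f g : ℝ → H} {s : Set ℝ}
    {ε : ℝ} (hg : IsBounded (range g)) (h : ∀ t ∈ s, ‖f t - g t‖ ≤ ε) : IsBounded (f '' s) := by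
  refine (hg.cthickening (δ := ε)).subset ?_
  rintro _ ⟨t, ht, rfl⟩
  exact Metric.mem_cthickening_of_dist_le _ (g t) _ _ ⟨t, rfl⟩ (dist_eq_norm _ (g t) ▸ h t ht)

section Trajectories

variable [MetricSpace Q] [NormedAddCommGroup H] {ϑ : ℝ → Q → Q} {ψ : ℝ → Q → H → H} {q : Q}
  {σ : ℝ}

theorem IsCocycle.exists_periodic_traj_of_isFixedPt (hψ : IsCocycle ϑ ψ) (hq : ϑ σ q = q)
    (hϑ : Periodic (fun t => ϑ t q) σ) (hσ : 0 < σ) {p : H} (hp : IsFixedPt (ψ σ q) p) :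
    ∃ w : ℝ → H, IsCompleteTraj ϑ ψ q w ∧ Periodic w σ ∧ w 0 = p := by
  have hindep : ∀ t (m n : ℕ), 0 ≤ t + m * σ → 0 ≤ t + n * σ →
      ψ (t + m * σ) q p = ψ (t + n * σ) q p := by
    intro t m n hm hn
    wlog hmn : m ≤ n generalizing m n
    · exact (this n m hn hm (le_of_not_ge hmn)).symm
    rw [← Nat.add_sub_cancel' hmn, Nat.cast_add, add_mul, ← add_assoc,
      hψ.apply_add_nat_mul hq hσ.le hm, (hp.iterate _).eq]
  set N : ℝ → ℕ := fun t => ⌈-t / σ⌉₊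
  have hN : ∀ t, 0 ≤ t + N t * σ := fun t => by
    have := (div_le_iff₀ hσ).mp (Nat.le_ceil (-t / σ))
    linarith
  set w : ℝ → H := fun t => ψ (t + N t * σ) q p
  have hw : ∀ t (n : ℕ), 0 ≤ t + n * σ → w t = ψ (t + n * σ) q p :=
    fun t n hn => hindep t _ n (hN t) hn
  refine ⟨w, ⟨continuous_iff_continuousAt.mpr fun t₀ => ?_, fun t s ht => ?_⟩, fun t => ?_, ?_⟩
  · have hpos : 0 < t₀ + (N t₀ + 1 : ℕ) * σ := by push_cast; linarith [hN t₀]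
    refine (((hψ.continuousOn_orbit q p).continuousAt (Ici_mem_nhds hpos)).comp
      (f := (· + _)) (continuous_add_const _).continuousAt).congr ?_
    filter_upwards [(continuous_add_const _).continuousAt.eventually (Ioi_mem_nhds hpos)]
      with t ht using (hw t _ (le_of_lt ht)).symm
  · rw [hw (t + s) (N s) (by linarith [hN s]), hw s (N s) (hN s), add_assoc,
      hψ.2.1 t _ ht (hN s), show ϑ (s + N s * σ) q = ϑ s q from hϑ.nat_mul (N s) s]
  · rw [hw (t + σ) (N t) (by linarith [hN t]), hw t (N t + 1) (by push_cast; linarith [hN t])]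
    push_cast
    ring_nf
  · rw [hw 0 0 (by simp)]
    simp [hψ.1]

theorem LyapunovStable.tendsto_sub_of_tendsto_iterate {v : ℝ → H} (hstab : LyapunovStable ψ q v)
    (hψ : IsCocycle ϑ ψ) (hq : ϑ σ q = q) (hσ : 0 ≤ σ) (hv : Periodic v σ) {u₀ : H}
    (hx : Tendsto (fun n => (ψ σ q)^[n] u₀) atTop (𝓝 (v 0))) :
    Tendsto (fun t => ψ t q u₀ - v t) atTop (𝓝 0) := by
  refine Metric.tendsto_atTop.mpr fun ε hε => ?_
  obtain ⟨η, hη, hstabη⟩ := hstab ε hε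
  obtain ⟨N, hN⟩ := (hx.eventually (Metric.ball_mem_nhds _ hη)).exists
  refine ⟨N * σ, fun t ht => ?_⟩
  have hs : 0 ≤ t - N * σ := sub_nonneg.mpr ht
  rw [dist_zero_right, ← sub_add_cancel t (N * σ), hψ.apply_add_nat_mul hq hσ hs, hv.nat_mul N]
  exact hstabη _ (mem_ball_iff_norm.mp hN) _ hs

end Trajectories

theorem isolated_stable_is_asymptotically_stable_general
    {H : Type*} [NormedAddCommGroup H] [InnerProductSpace ℝ H]
    [CompleteSpace H]
    (σ : ℝ) (hσ : 0 < σ)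
    (ψ : ℝ → AddCircle σ → H → H)
    (hcoc : IsCocycle (circleFlow σ) ψ)
    (P : H →L[ℝ] H) (Hplus Hminus : Submodule ℝ H)
    (h1 : HypH1 P Hplus Hminus)
    (h2 : HypH2 Hminus 1)
    (δ ν : ℝ) (h3 : HypH3 ψ P δ ν)
    (hcom3 : HypCOM3 ψ)
    (q : AddCircle σ) (v : ℝ → H)
    (hv : IsCompleteTraj (circleFlow σ) ψ q v)
    (hvper : ∀ t : ℝ, v (t + σ) = v t)
    (hisolated : ∃ ε > (0:ℝ), ∀ w : ℝ → H, IsCompleteTraj (circleFlow σ) ψ q w →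
      (∀ t : ℝ, w (t + σ) = w t) → ‖w 0 - v 0‖ < ε → w 0 = v 0)
    (hstable : LyapunovStable ψ q v) :
    ∃ η > (0:ℝ), ∀ u₀ : H, ‖u₀ - v 0‖ < η →
      Tendsto (fun t : ℝ => ψ t q u₀ - v t) atTop (𝓝 0) := by
  obtain ⟨e, he⟩ := h1.exists_inner_ne_zero_of_inner_neg h2
  obtain ⟨ε, hε, hiso⟩ := hisolated
  obtain ⟨η, hη, hstabη⟩ := hstable (ε / 2) (half_pos hε)
  have hq := circleFlow_period σ q
  have hvper : Periodic v σ := hvper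
  refine ⟨η, hη, fun u₀ hu₀ => ?_⟩
  have hT : Continuous (ψ σ q) := hcoc.continuous_apply_s17 hσ.le
  have hnear : ∀ n, (ψ σ q)^[n] u₀ ∈ Metric.closedBall (v 0) (ε / 2) := fun n => by
    simpa [dist_eq_norm, hcoc.apply_nat_mul hq hσ.le, (hvper.nat_mul n).eq] using
      (hstabη u₀ hu₀ (n * σ) (by positivity)).le
  have hK := hcom3 q u₀ <| isBounded_image_of_forall_norm_sub_le
    (hvper.isBounded_of_continuous hσ.ne' hv.1) fun t ht => (hstabη u₀ hu₀ t ht).le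
  have horbit : ∀ n, (ψ σ q)^[n] u₀ ∈ closure ((fun t => ψ t q u₀) '' Ici 0) := fun n =>
    subset_closure ⟨n * σ, mem_Ici.mpr (by positivity), hcoc.apply_nat_mul hq hσ.le n u₀⟩
  have hΩ : {y | MapClusterPt y atTop ((ψ σ q)^[·] u₀)} ⊆ {v 0} :=
    h3.subset_singleton_of_surjOn hcoc hq hσ (hK.isCompact_setOf_mapClusterPt (.of_forall horbit))
      (mapsTo_mapClusterPt_iterate hT) (surjOn_mapClusterPt_iterate hT hK horbit) he
      fun p hp hfix => by
        obtain ⟨w, hw, hwper, rfl⟩ :=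
          hcoc.exists_periodic_traj_of_isFixedPt hq (circleFlow_periodic σ q) hσ hfix
        refine hiso w hw hwper ((mem_closedBall_iff_norm.mp ?_).trans_lt (half_lt_self hε))
        exact Metric.isClosed_closedBall.mem_of_mapClusterPt hp (.of_forall hnear)
  exact hstable.tendsto_sub_of_tendsto_iterate hcoc hq hσ.le hvper
    (hK.tendsto_nhds_of_unique_mapClusterPt (.of_forall horbit) fun _ _ hy => hΩ hy)

/-- Proposition 5: for a σ-periodic cocycle under (H1), (H2) with `j = 1`, (H3) and
(COM3), every isolated Lyapunov stable σ-periodic trajectory is asymptotically Lyapunov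
stable. -/
theorem isolated_stable_is_asymptotically_stable
    {H : Type*} [NormedAddCommGroup H] [InnerProductSpace ℝ H]
    [CompleteSpace H] [TopologicalSpace.SeparableSpace H]
    (σ : ℝ) (hσ : 0 < σ)
    (ψ : ℝ → AddCircle σ → H → H)
    (hcoc : IsCocycle (circleFlow σ) ψ)
    (P : H →L[ℝ] H) (Hplus Hminus : Submodule ℝ H)
    (h1 : HypH1 P Hplus Hminus)
    (h2 : HypH2 Hminus 1)
    (δ ν : ℝ) (h3 : HypH3 ψ P δ ν)
    (hcom3 : HypCOM3 ψ)
    (q : AddCircle σ) (v : ℝ → H)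
    (hv : IsCompleteTraj (circleFlow σ) ψ q v)
    (hvper : ∀ t : ℝ, v (t + σ) = v t)
    (hisolated : ∃ ε > (0:ℝ), ∀ w : ℝ → H, IsCompleteTraj (circleFlow σ) ψ q w →
      (∀ t : ℝ, w (t + σ) = w t) → ‖w 0 - v 0‖ < ε → w 0 = v 0)
    (hstable : LyapunovStable ψ q v) :
    ∃ η > (0:ℝ), ∀ u₀ : H, ‖u₀ - v 0‖ < η →
      Tendsto (fun t : ℝ => ψ t q u₀ - v t) atTop (𝓝 0) :=
  isolated_stable_is_asymptotically_stable_general σ hσ ψ hcoc P Hplus Hminus h1 h2 δ ν h3 hcom3 q v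
    hv hvper hisolated hstable
end
end

section
/- Let H be a real Hilbert space, D ⊆ H a linear subspace, A : D → H a linear map whose range is all of H, and P : H → H a bounded self-adjoint operator. If there is δ > 0 such that (Au, Pu) ≤ −δ|u|² for all u ∈ D, then Ker P = {0}. -/
open RealInnerProductSpace

/-- Proposition B.1: if `A : D(A) → H` is a linear operator with range all of `H`, `P` is
a bounded self-adjoint operator and the Lyapunov inequality `(Au, Pu) ≤ −δ|u|²` holds on
`D(A)` for some `δ > 0`, then `Ker P = {0}`. -/
theorem kernel_trivial_of_lyapunov_inequality
    {H : Type*} [NormedAddCommGroup H] [InnerProductSpace ℝ H] [CompleteSpace H]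
    (D : Submodule ℝ H) (A : D →ₗ[ℝ] H) (hA : Function.Surjective A)
    (P : H →L[ℝ] H) (hP : IsSelfAdjoint P)
    (δ : ℝ) (hδ : 0 < δ)
    (hLyap : ∀ u : D, ⟪A u, P (u : H)⟫ ≤ -δ * ‖(u : H)‖ ^ 2) :
    ∀ x : H, P x = 0 → x = 0 := by
  intro x hx
  obtain ⟨u, hu⟩ := hA x
  have hz : ⟪A u, P (u : H)⟫ = 0 := by
    have h2 := hP.isSymmetric x (u : H)
    simp only [ContinuousLinearMap.coe_coe] at h2
    rw [hu, ← h2, hx, inner_zero_left]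
  have h := hLyap u
  rw [hz] at h
  have hu0 : (u : H) = 0 := by
    by_contra h0
    have hn : ‖(u : H)‖ ≠ 0 := by simpa using h0
    have : 0 < δ * ‖(u : H)‖ ^ 2 := by positivity
    linarith
  have : A u = 0 := by
    have : u = 0 := Subtype.ext hu0
    simp [this]
  rw [← hu, this]
end

section
/- Let H be a real Hilbert space and P : H → H a bounded self-adjoint operator, and suppose H = H⁺ ⊕ H⁻ ⊕ H⁰ is an orthogonal direct sum of closed P-invariant subspaces with (Pu,u) > 0 for all nonzero u ∈ H⁺, (Pu,u) < 0 for all nonzero u ∈ H⁻, and P = 0 on H⁰. Suppose H = H^s ⊕ H^u is a (not necessarily orthogonal) direct sum of subspaces with dim H^u = j < ∞. Then: (1) if (Pu,u) ≥ 0 for all u ∈ H^s, then dim H⁻ ≤ j; (2) if (Pu,u) < 0 for all nonzero u ∈ H^u, then dim H⁻ ≥ j. -/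
open RealInnerProductSpace

/-- If `A` and `B` are complementary submodules and `W ⊓ A = ⊥`, then
`rank W ≤ rank B` (project `W` to `B` along `A`). -/
lemma rank_le_of_isCompl_of_inf_eq_bot {R M : Type*} [Ring R] [AddCommGroup M] [Module R M]
    (A B W : Submodule R M) (h : IsCompl A B) (hw : W ⊓ A = ⊥) :
    Module.rank R W ≤ Module.rank R B := by
  have hinj : Function.Injective (A.mkQ.comp W.subtype) := by
    rw [← LinearMap.ker_eq_bot, LinearMap.ker_comp, Submodule.ker_mkQ]
    rw [Submodule.eq_bot_iff]
    rintro ⟨x, hxW⟩ hx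
    have hxA : x ∈ A := hx
    have : x ∈ W ⊓ A := ⟨hxW, hxA⟩
    rw [hw, Submodule.mem_bot] at this
    exact Subtype.ext this
  calc Module.rank R W ≤ Module.rank R (M ⧸ A) :=
        LinearMap.rank_le_of_injective _ hinj
    _ = Module.rank R B := (Submodule.quotientEquivOfIsCompl A B h).rank_eq

/-- Propositions B.2: let `H = H⁺ ⊕ H⁻ ⊕ H⁰` be an orthogonal direct sum of closed
`P`-invariant subspaces on which the self-adjoint bounded operator `P` is positive
definite, negative definite and zero respectively, and let `H = Hˢ ⊕ Hᵘ` be a direct sum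
with `dim Hᵘ = j < ∞`. Then: (1) if the quadratic form of `P` is nonnegative on `Hˢ`
then `dim H⁻ ≤ j`; (2) if it is negative definite on `Hᵘ` then `dim H⁻ ≥ j`. -/
theorem dimension_estimates_for_negative_subspace
    {H : Type*} [NormedAddCommGroup H] [InnerProductSpace ℝ H] [CompleteSpace H]
    (P : H →L[ℝ] H) (hP : IsSelfAdjoint P)
    (Hplus Hminus Hzero : Submodule ℝ H)
    (hcp : IsClosed (Hplus : Set H)) (hcm : IsClosed (Hminus : Set H))
    (hcz : IsClosed (Hzero : Set H))
    (horth1 : Hminus ≤ Hplusᗮ) (horth2 : Hzero ≤ Hplusᗮ) (horth3 : Hzero ≤ Hminusᗮ)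
    (hsum : Hplus ⊔ Hminus ⊔ Hzero = ⊤)
    (hinvp : ∀ u ∈ Hplus, P u ∈ Hplus) (hinvm : ∀ u ∈ Hminus, P u ∈ Hminus)
    (hinvz : ∀ u ∈ Hzero, P u ∈ Hzero)
    (hpos : ∀ u ∈ Hplus, u ≠ 0 → (0:ℝ) < ⟪P u, u⟫)
    (hneg : ∀ u ∈ Hminus, u ≠ 0 → ⟪P u, u⟫ < (0:ℝ))
    (hzero : ∀ u ∈ Hzero, P u = 0)
    (Hs Hu : Submodule ℝ H)
    (hdisj : Hs ⊓ Hu = ⊥) (hspan : Hs ⊔ Hu = ⊤)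
    (j : ℕ) (hfin : FiniteDimensional ℝ Hu) (hj : Module.finrank ℝ Hu = j) :
    ((∀ u ∈ Hs, (0:ℝ) ≤ ⟪P u, u⟫) → Module.rank ℝ Hminus ≤ (j : Cardinal)) ∧
    ((∀ u ∈ Hu, u ≠ 0 → ⟪P u, u⟫ < (0:ℝ)) → (j : Cardinal) ≤ Module.rank ℝ Hminus) := by
  have hrankHu : Module.rank ℝ Hu = (j : Cardinal) := by
    rw [← hj]; exact (Module.finrank_eq_rank ℝ Hu).symm
  -- On Hplus ⊔ Hzero the quadratic form is nonnegative.
  have hnn : ∀ v ∈ Hplus ⊔ Hzero, (0:ℝ) ≤ ⟪P v, v⟫ := by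
    intro v hv
    obtain ⟨p, hp, z, hz, rfl⟩ := Submodule.mem_sup.mp hv
    have hPz : P z = 0 := hzero z hz
    have hPpz : ⟪P p, z⟫ = 0 := (Submodule.mem_orthogonal _ _).mp (horth2 hz) _ (hinvp p hp)
    have key : ⟪P (p + z), p + z⟫ = ⟪P p, p⟫ := by
      rw [map_add, hPz, add_zero, inner_add_right, hPpz, add_zero]
    rw [key]
    by_cases hp0 : p = 0
    · simp [hp0]
    · exact le_of_lt (hpos p hp hp0)
  constructor
  · intro hnns
    -- Hminus ⊓ Hs = ⊥
    have hms : Hminus ⊓ Hs = ⊥ := by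
      rw [Submodule.eq_bot_iff]
      rintro x ⟨hxm, hxs⟩
      by_contra hx0
      exact absurd (hnns x hxs) (not_le.mpr (hneg x hxm hx0))
    have hcompl : IsCompl Hs Hu := ⟨disjoint_iff.mpr hdisj, codisjoint_iff.mpr hspan⟩
    calc Module.rank ℝ Hminus ≤ Module.rank ℝ Hu :=
          rank_le_of_isCompl_of_inf_eq_bot Hs Hu Hminus hcompl hms
      _ = (j : Cardinal) := hrankHu
  · intro hnegu
    -- Hminus is a complement of Hplus ⊔ Hzero
    have hdisj2 : (Hplus ⊔ Hzero) ⊓ Hminus = ⊥ := by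
      rw [Submodule.eq_bot_iff]
      rintro x ⟨hxpz, hxm⟩
      obtain ⟨p, hp, z, hz, hx⟩ := Submodule.mem_sup.mp hxpz
      have h1 : ⟪p, x⟫ = 0 := (Submodule.mem_orthogonal _ _).mp (horth1 hxm) _ hp
      have h2 : ⟪x, z⟫ = 0 := (Submodule.mem_orthogonal _ _).mp (horth3 hz) _ hxm
      subst hx
      have : ⟪p + z, p + z⟫ = 0 := by
        rw [inner_add_right, h2, add_zero, real_inner_comm]; exact h1
      exact inner_self_eq_zero.mp this
    have hcompl2 : IsCompl (Hplus ⊔ Hzero) Hminus := by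
      refine ⟨disjoint_iff.mpr hdisj2, codisjoint_iff.mpr ?_⟩
      rw [sup_assoc, sup_comm Hzero Hminus, ← sup_assoc, hsum]
    have hupz : Hu ⊓ (Hplus ⊔ Hzero) = ⊥ := by
      rw [Submodule.eq_bot_iff]
      rintro x ⟨hxu, hxpz⟩
      by_contra hx0
      exact absurd (hnn x hxpz) (not_le.mpr (hnegu x hxu hx0))
    calc (j : Cardinal) = Module.rank ℝ Hu := hrankHu.symm
      _ ≤ Module.rank ℝ Hminus :=
          rank_le_of_isCompl_of_inf_eq_bot (Hplus ⊔ Hzero) Hminus Hu hcompl2 hupz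
end
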